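/- arXiv:2401.02915 — 3 statements merged into one kernel-verified Lean document; each statement's English description precedes it below -/
import Mathlib

section
/- Let k be a field of odd characteristic p and let i be an integer with 1 ≤ i ≤ (p−1)/2. Consider the k-algebra M = k[x,y]/(x^i, y^i), made into a module over the polynomial ring k[X] by letting X act as multiplication by x+y. Let σ : M → M be the k[X]-module involution induced by swapping x and y, and let M_S and M_A be the +1 and −1 eigenspaces of σ (so M = M_S ⊕ M_A as k[X]-modules). Then there are k[X]-module isomorphisms M_S ≅ ⊕_{1 ≤ k ≤ i, k ≡ i (mod 2)} k[X]/(X^{2k−1}) and M_A ≅ ⊕_{1 ≤ k ≤ i, k ≢ i (mod 2)} k[X]/(X^{2k−1}). -/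
open MvPolynomial

set_option synthInstance.maxHeartbeats 1000000
set_option maxHeartbeats 1000000

namespace VerlindeSymmetry

variable (k : Type*) [Field k] (i : ℕ)

/-- The ideal `(x^i, y^i)` of `k[x, y]`. -/
noncomputable def xyIdeal : Ideal (MvPolynomial (Fin 2) k) :=
  Ideal.span {(X 0 : MvPolynomial (Fin 2) k) ^ i, (X 1 : MvPolynomial (Fin 2) k) ^ i}

/-- The algebra `M = k[x, y]/(x^i, y^i)`. -/
abbrev Mxy : Type _ := MvPolynomial (Fin 2) k ⧸ xyIdeal k i

/-- The class of `x + y` in `M`. -/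
noncomputable def zElt : Mxy k i :=
  Ideal.Quotient.mk (xyIdeal k i) (X 0 + X 1)

/-- `M` as a module over the polynomial ring `k[X]`, with `X` acting as multiplication by
`x + y`. -/
noncomputable instance : Module (Polynomial k) (Mxy k i) :=
  Module.compHom (Mxy k i) (Polynomial.aeval (zElt k i)).toRingHom

lemma smul_def (c : Polynomial k) (m : Mxy k i) :
    c • m = Polynomial.aeval (zElt k i) c * m := by with_unfolding_all rfl

lemma rename_swap_mem (a : MvPolynomial (Fin 2) k) (ha : a ∈ xyIdeal k i) :
    MvPolynomial.rename (Equiv.swap (0 : Fin 2) 1) a ∈ xyIdeal k i := by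
  have hle : xyIdeal k i ≤
      (xyIdeal k i).comap (MvPolynomial.rename (Equiv.swap (0 : Fin 2) 1)).toRingHom := by
    rw [xyIdeal, Ideal.span_le]
    rintro b hb
    simp only [Set.mem_insert_iff, Set.mem_singleton_iff] at hb
    rcases hb with rfl | rfl
    · show (MvPolynomial.rename (Equiv.swap (0 : Fin 2) 1)) ((X 0 : MvPolynomial (Fin 2) k) ^ i)
        ∈ xyIdeal k i
      rw [map_pow, rename_X, Equiv.swap_apply_left]
      exact Ideal.subset_span (by simp)
    · show (MvPolynomial.rename (Equiv.swap (0 : Fin 2) 1)) ((X 1 : MvPolynomial (Fin 2) k) ^ i)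
        ∈ xyIdeal k i
      rw [map_pow, rename_X, Equiv.swap_apply_right]
      exact Ideal.subset_span (by simp)
  exact hle ha

/-- The `k`-algebra involution of `M` induced by swapping `x` and `y`. -/
noncomputable def swapInv : Mxy k i →ₐ[k] Mxy k i :=
  Ideal.Quotient.liftₐ (xyIdeal k i)
    ((Ideal.Quotient.mkₐ k (xyIdeal k i)).comp
      (MvPolynomial.rename (Equiv.swap (0 : Fin 2) 1)))
    (fun a ha => by
      show Ideal.Quotient.mk (xyIdeal k i)
        ((MvPolynomial.rename (Equiv.swap (0 : Fin 2) 1)) a) = 0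
      exact Ideal.Quotient.eq_zero_iff_mem.mpr (rename_swap_mem k i a ha))

lemma swapInv_z : swapInv k i (zElt k i) = zElt k i := by
  have h := Ideal.Quotient.liftₐ_comp (xyIdeal k i)
    ((Ideal.Quotient.mkₐ k (xyIdeal k i)).comp
      (MvPolynomial.rename (Equiv.swap (0 : Fin 2) 1)))
    (fun a ha => by
      show Ideal.Quotient.mk (xyIdeal k i)
        ((MvPolynomial.rename (Equiv.swap (0 : Fin 2) 1)) a) = 0
      exact Ideal.Quotient.eq_zero_iff_mem.mpr (rename_swap_mem k i a ha))
  have h2 := DFunLike.congr_fun h ((X 0 : MvPolynomial (Fin 2) k) + X 1)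
  simp only [AlgHom.coe_comp, Function.comp_apply, Ideal.Quotient.mkₐ_eq_mk] at h2
  have h3 : (MvPolynomial.rename (Equiv.swap (0 : Fin 2) 1))
      ((X 0 : MvPolynomial (Fin 2) k) + X 1) = X 0 + X 1 := by
    rw [map_add, rename_X, rename_X, Equiv.swap_apply_left, Equiv.swap_apply_right, add_comm]
  rw [zElt]
  rw [show swapInv k i = Ideal.Quotient.liftₐ (xyIdeal k i)
    ((Ideal.Quotient.mkₐ k (xyIdeal k i)).comp
      (MvPolynomial.rename (Equiv.swap (0 : Fin 2) 1)))
    (fun a ha => by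
      show Ideal.Quotient.mk (xyIdeal k i)
        ((MvPolynomial.rename (Equiv.swap (0 : Fin 2) 1)) a) = 0
      exact Ideal.Quotient.eq_zero_iff_mem.mpr (rename_swap_mem k i a ha)) from rfl]
  rw [h2, h3]

lemma swapInv_smul (c : Polynomial k) (m : Mxy k i) :
    swapInv k i (c • m) = c • swapInv k i m := by
  rw [smul_def, smul_def, map_mul]
  congr 1
  calc swapInv k i (Polynomial.aeval (zElt k i) c)
      = Polynomial.aeval (swapInv k i (zElt k i)) c :=
        (Polynomial.aeval_algHom_apply (swapInv k i) (zElt k i) c).symm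
    _ = Polynomial.aeval (zElt k i) c := by rw [swapInv_z]

/-- The symmetric part `M_S` of `M`, as a `k[X]`-submodule. -/
noncomputable def MS : Submodule (Polynomial k) (Mxy k i) where
  carrier := {m | swapInv k i m = m}
  zero_mem' := by simp
  add_mem' := by
    intro a b (ha : swapInv k i a = a) (hb : swapInv k i b = b)
    show swapInv k i (a + b) = a + b
    rw [map_add, ha, hb]
  smul_mem' := by
    intro c m (hm : swapInv k i m = m)
    show swapInv k i (c • m) = c • m
    rw [swapInv_smul, hm]

/-- The antisymmetric part `M_A` of `M`, as a `k[X]`-submodule. -/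
noncomputable def MA : Submodule (Polynomial k) (Mxy k i) where
  carrier := {m | swapInv k i m = -m}
  zero_mem' := by simp
  add_mem' := by
    intro a b (ha : swapInv k i a = -a) (hb : swapInv k i b = -b)
    show swapInv k i (a + b) = -(a + b)
    rw [map_add, ha, hb, neg_add]
  smul_mem' := by
    intro c m (hm : swapInv k i m = -m)
    show swapInv k i (c • m) = -(c • m)
    rw [swapInv_smul, hm, smul_neg]

/-- The cyclic `k[X]`-module `k[X]/(X^(2j-1))`. -/
abbrev cyclic (j : ℕ) : Type _ :=
  Polynomial k ⧸ Ideal.span {(Polynomial.X : Polynomial k) ^ (2 * j - 1)}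

end VerlindeSymmetry

/-!
`M` is the tensor square of `k[t]/(t^i)`, the `i`-dimensional irreducible representation of
`sl₂`, and multiplication by `z = x + y` is the lowering operator of the diagonal action.
For `1 ≤ l ≤ i` there is a primitive vector `v_l = primVec l` (killed by the raising operator
`e`) of degree `i - l` and weight `2l - 2`. For a primitive vector of weight `w` one has
`e z^(s+1) v = (s+1)(w-s) z^s v`, and the scalars `(s+1)(w-s)` that occur below are products
of positive integers at most `2i`, hence invertible in `k` as `(2i)! ≠ 0`. So the chains
`z^r v_l`, `r < 2l - 1`, are linearly independent, and as there are `∑ (2l - 1) = i²` of them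
they form a basis of `M`. Moreover `z^(2l-1) v_l` is primitive of weight `-2l` and is killed by
a power of `z` for degree reasons, so it vanishes. This gives `M ≅ ⊕ k[X]/(X^(2l-1))`. The swap
commutes with `z` and acts on `v_l` by `(-1)^(i-l)`, so the two eigenspaces are the sums of the
chains with the matching sign.
-/

open scoped Polynomial

section Sl2Chains

variable {R V : Type*} [CommRing R] [AddCommGroup V] [Module R V] {z e h : Module.End R V}
  {v : V} {w : R}

lemma Module.End.apply_apply_of_lie_eq {f g c : Module.End R V} (hfg : ⁅f, g⁆ = c) (u : V) :
    f (g u) = g (f u) + c u := by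
  simp [← hfg, Ring.lie_def]

lemma sl2_h_pow_apply (hhz : ⁅h, z⁆ = -(2 • z)) (hv : h v = w • v) (s : ℕ) :
    h ((z ^ s) v) = (w - 2 * s) • (z ^ s) v := by
  induction s with
  | zero => simpa using hv
  | succ s ih =>
    rw [pow_succ', Module.End.mul_apply, Module.End.apply_apply_of_lie_eq hhz, ih, map_smul]
    simp only [LinearMap.neg_apply, LinearMap.smul_apply, ← Nat.cast_smul_eq_nsmul R]
    rw [← sub_eq_add_neg, ← sub_smul]
    congr 1
    push_cast
    ring

lemma sl2_e_pow_succ_apply (hez : ⁅e, z⁆ = h) (hhz : ⁅h, z⁆ = -(2 • z)) (he : e v = 0)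
    (hv : h v = w • v) (s : ℕ) :
    e ((z ^ (s + 1)) v) = ((s + 1) * (w - s)) • (z ^ s) v := by
  induction s with
  | zero => simp [Module.End.apply_apply_of_lie_eq hez, he, hv]
  | succ s ih =>
    rw [pow_succ' z (s + 1), Module.End.mul_apply, Module.End.apply_apply_of_lie_eq hez, ih,
      sl2_h_pow_apply hhz hv, map_smul, ← Module.End.mul_apply, ← pow_succ', ← add_smul]
    congr 1
    push_cast
    ring

lemma sl2_e_pow_pow_apply (hez : ⁅e, z⁆ = h) (hhz : ⁅h, z⁆ = -(2 • z)) (he : e v = 0)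
    (hv : h v = w • v) (s : ℕ) :
    (e ^ s) ((z ^ s) v) = (∏ t ∈ Finset.range s, ((t + 1) * (w - t))) • v := by
  induction s with
  | zero => simp
  | succ s ih =>
    rw [pow_succ e, Module.End.mul_apply, sl2_e_pow_succ_apply hez hhz he hv, map_smul, ih,
      smul_smul, Finset.prod_range_succ, mul_comm]

end Sl2Chains

section Sl2Field

variable {k V ι : Type*} [Field k] [AddCommGroup V] [Module k V] {z e h : Module.End k V}

lemma sl2_eq_zero_of_pow_apply_eq_zero (hez : ⁅e, z⁆ = h) (hhz : ⁅h, z⁆ = -(2 • z)) {v : V}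
    {w : k} (he : e v = 0) (hv : h v = w • v) {N : ℕ} (hN : (z ^ N) v = 0)
    (hw : ∀ s < N, ((s + 1) * (w - s) : k) ≠ 0) : v = 0 := by
  suffices ∀ m ≤ N, (z ^ (N - m)) v = 0 by simpa using this N le_rfl
  intro m hm
  induction m with
  | zero => simpa using hN
  | succ m ih =>
    have := sl2_e_pow_succ_apply hez hhz he hv (N - (m + 1))
    rw [show N - (m + 1) + 1 = N - m by omega, ih (by omega), map_zero, eq_comm,
      smul_eq_zero] at this
    exact this.resolve_left (hw _ (by omega))

lemma sl2_linearIndependent_pow_apply [Fintype ι] (hez : ⁅e, z⁆ = h) (hhz : ⁅h, z⁆ = -(2 • z))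
    {v : ι → V} {w : ι → k} {n : ι → ℕ} (hli : LinearIndependent k v) (he : ∀ l, e (v l) = 0)
    (hv : ∀ l, h (v l) = w l • v l)
    (hw : ∀ l, ∀ s, s + 1 < n l → ((s + 1) * (w l - s) : k) ≠ 0) :
    LinearIndependent k fun x : (l : ι) × Fin (n l) => (z ^ (x.2 : ℕ)) (v x.1) := by
  set γ : ι → ℕ → k := fun l s => ∏ t ∈ Finset.range s, ((t + 1) * (w l - t))
  have hγ : ∀ l s, s < n l → γ l s ≠ 0 := fun l s hs =>
    Finset.prod_ne_zero_iff.mpr fun t ht => hw l t (by simp at ht; omega)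
  have hlow : ∀ l {r R : ℕ}, r < R → (e ^ R) ((z ^ r) (v l)) = 0 := fun l r R hrR => by
    obtain ⟨d, rfl⟩ : ∃ d, R = d + 1 + r := ⟨R - r - 1, by omega⟩
    rw [pow_add, Module.End.mul_apply, sl2_e_pow_pow_apply hez hhz (he l) (hv l), map_smul,
      pow_succ, Module.End.mul_apply, he, map_zero, smul_zero]
  classical
  rw [Fintype.linearIndependent_iff]
  intro g hg
  by_contra! hne
  -- Apply `e ^ R` for the largest `R` carrying a nonzero coefficient: shorter chain pieces die,
  -- longer ones have zero coefficients, and a relation among the `v l` remains.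
  obtain ⟨x₀, hx₀, hmax⟩ := (Finset.univ.filter (g · ≠ 0)).exists_max_image (fun x => (x.2 : ℕ))
    (by simpa [Finset.filter_nonempty_iff] using hne)
  simp only [Finset.mem_filter, Finset.mem_univ, true_and] at hx₀ hmax
  set R : ℕ := (x₀.2 : ℕ)
  have hrel : ∑ l, (∑ r : Fin (n l), if (r : ℕ) = R then g ⟨l, r⟩ * γ l R else 0) • v l = 0 := by
    rw [← map_zero (e ^ R), ← hg, map_sum, Fintype.sum_sigma]
    refine Finset.sum_congr rfl fun l _ => ?_
    rw [Finset.sum_smul]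
    refine Finset.sum_congr rfl fun r _ => ?_
    rw [map_smul]
    rcases lt_trichotomy (r : ℕ) R with hr | hr | hr
    · rw [if_neg hr.ne, zero_smul, hlow l hr, smul_zero]
    · rw [if_pos hr, ← hr, sl2_e_pow_pow_apply hez hhz (he l) (hv l), smul_smul]
    · have : g ⟨l, r⟩ = 0 := by
        by_contra h0
        exact absurd (hmax _ h0) (not_le.mpr hr)
      rw [if_neg hr.ne', zero_smul, this, zero_smul]
  have := Fintype.linearIndependent_iff.mp hli _ hrel x₀.1
  rw [Finset.sum_eq_single x₀.2 (fun r _ hr => if_neg fun h => hr (Fin.ext h)) (by simp),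
    if_pos rfl] at this
  exact mul_ne_zero hx₀ (hγ _ _ x₀.2.isLt) this

end Sl2Field

lemma Module.Basis.mem_span_image_of_apply_eq_smul {κ k M : Type*} [Field k] [AddCommGroup M]
    [Module k M] (b : Module.Basis κ k M) {σ : Module.End k M} {ε : κ → k}
    (hσ : ∀ x, σ (b x) = ε x • b x) {c : k} {m : M} (hm : σ m = c • m) :
    m ∈ Submodule.span k (b '' {x | ε x = c}) := by
  classical
  rw [b.mem_span_image]
  intro x hx
  have hcoord : (b.coord x).comp σ = ε x • b.coord x :=
    b.ext fun y => by by_cases hxy : y = x <;> simp [hσ, hxy]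
  have := LinearMap.congr_fun hcoord m
  simp only [LinearMap.comp_apply, hm, map_smul, LinearMap.smul_apply, Module.Basis.coord_apply,
    smul_eq_mul] at this
  exact (mul_right_cancel₀ (Finsupp.mem_support_iff.mp hx) this).symm

section CyclicSum

abbrev cyclicModule (k : Type*) [CommRing k] (n : ℕ) : Type _ :=
  k[X] ⧸ Ideal.span {(Polynomial.X : k[X]) ^ n}

lemma span_range_mk_X_pow {k : Type*} [CommRing k] (n : ℕ) :
    Submodule.span k (Set.range fun r : Fin n =>
      (Submodule.Quotient.mk (Polynomial.X ^ (r : ℕ)) : cyclicModule k n)) = ⊤ := by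
  set S := Submodule.span k (Set.range fun r : Fin n =>
    (Submodule.Quotient.mk (Polynomial.X ^ (r : ℕ)) : cyclicModule k n))
  have hX : ∀ r, (Submodule.Quotient.mk (Polynomial.X ^ r) : cyclicModule k n) ∈ S := by
    intro r
    by_cases hr : r < n
    · exact Submodule.subset_span ⟨⟨r, hr⟩, rfl⟩
    · rw [(Submodule.Quotient.mk_eq_zero _).mpr (Ideal.mem_span_singleton.mpr
        (pow_dvd_pow Polynomial.X (not_lt.mp hr)))]
      exact S.zero_mem
  refine eq_top_iff.mpr fun m _ => ?_
  obtain ⟨q, rfl⟩ := Submodule.Quotient.mk_surjective _ m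
  rw [q.as_sum_range_C_mul_X_pow, ← Submodule.mkQ_apply, map_sum]
  refine Submodule.sum_mem _ fun r _ => ?_
  rw [← Polynomial.smul_eq_C_mul, LinearMap.map_smul_of_tower, Submodule.mkQ_apply]
  exact S.smul_mem _ (hX r)

variable {k M ι : Type*} [CommRing k] [AddCommGroup M] [Module k[X] M] [DecidableEq ι]
  (v : ι → M) (n : ι → ℕ) (hv : ∀ j, (Polynomial.X ^ n j : k[X]) • v j = 0)

noncomputable def cyclicSum : (DirectSum ι fun j => cyclicModule k (n j)) →ₗ[k[X]] M :=
  DirectSum.toModule k[X] ι M fun j =>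
    Submodule.liftQ _ (LinearMap.toSpanSingleton k[X] M (v j)) <| by
      rw [Ideal.span_le, Set.singleton_subset_iff, SetLike.mem_coe, LinearMap.mem_ker,
        LinearMap.toSpanSingleton_apply, hv]

lemma cyclicSum_of_mk (j : ι) (q : k[X]) :
    cyclicSum v n hv (DirectSum.of _ j (Submodule.Quotient.mk q)) = q • v j := by
  rw [cyclicSum, ← DirectSum.lof_eq_of k[X], DirectSum.toModule_lof, Submodule.liftQ_apply,
    LinearMap.toSpanSingleton_apply]

lemma range_cyclicSum :
    LinearMap.range (cyclicSum v n hv) = Submodule.span k[X] (Set.range v) := by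
  apply le_antisymm
  · rintro _ ⟨x, rfl⟩
    induction x using DirectSum.induction_on with
    | zero => simp
    | of j m =>
      obtain ⟨q, rfl⟩ := Submodule.Quotient.mk_surjective _ m
      rw [cyclicSum_of_mk]
      exact Submodule.smul_mem _ q (Submodule.subset_span ⟨j, rfl⟩)
    | add x y hx hy => rw [map_add]; exact add_mem hx hy
  · rw [Submodule.span_le]
    rintro _ ⟨j, rfl⟩
    exact ⟨DirectSum.of _ j (Submodule.Quotient.mk 1), by rw [cyclicSum_of_mk, one_smul]⟩

end CyclicSum

lemma injective_cyclicSum {k M ι : Type*} [Field k] [AddCommGroup M] [Module k[X] M]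
    [Module k M] [IsScalarTower k k[X] M] [DecidableEq ι] {v : ι → M} {n : ι → ℕ}
    (hv : ∀ j, (Polynomial.X ^ n j : k[X]) • v j = 0)
    (hli : LinearIndependent k fun x : (j : ι) × Fin (n j) =>
      (Polynomial.X ^ (x.2 : ℕ) : k[X]) • v x.1) :
    Function.Injective (cyclicSum v n hv) := by
  set F : (j : ι) × Fin (n j) → DirectSum ι fun j => cyclicModule k (n j) :=
    fun x => DirectSum.lof k ι _ x.1 (Submodule.Quotient.mk (Polynomial.X ^ (x.2 : ℕ)))
  have hF : Submodule.span k (Set.range F) = ⊤ := by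
    refine eq_top_iff.mpr fun x _ => ?_
    induction x using DirectSum.induction_on with
    | zero => exact zero_mem _
    | of j m =>
      have hm : m ∈ Submodule.span k _ := (span_range_mk_X_pow (n j)).ge Submodule.mem_top
      rw [← DirectSum.lof_eq_of k]
      refine Submodule.span_mono ?_ (Submodule.apply_mem_span_image_of_mem_span _ hm)
      rintro _ ⟨_, ⟨r, rfl⟩, rfl⟩
      exact ⟨⟨j, r⟩, rfl⟩
    | add x y hx hy => exact add_mem (hx trivial) (hy trivial)
  refine LinearMap.injective_of_linearIndependent
    (M := DirectSum ι fun j => cyclicModule k (n j))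
    (f := (cyclicSum v n hv).restrictScalars k) hF ?_
  rwa [show (cyclicSum v n hv).restrictScalars k ∘ F = _ from
    funext fun x => cyclicSum_of_mk v n hv _ _]

namespace VerlindeSymmetry

variable {k : Type*} [Field k] {i : ℕ}

instance : IsScalarTower k k[X] (Mxy k i) :=
  ⟨fun c q m => by rw [smul_def, smul_def, map_smul, smul_mul_assoc]⟩

variable (k i) in
noncomputable def zOp : Module.End k (Mxy k i) := LinearMap.mulLeft k (zElt k i)

lemma zOp_apply (u : Mxy k i) : zOp k i u = zElt k i * u := rfl

lemma zOp_pow_apply (r : ℕ) (u : Mxy k i) :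
    (zOp k i ^ r) u = (Polynomial.X ^ r : k[X]) • u := by
  rw [zOp, LinearMap.pow_mulLeft, LinearMap.mulLeft_apply, smul_def, map_pow,
    Polynomial.aeval_X]

variable (k i) in
noncomputable def mon (a c : ℕ) : Mxy k i :=
  Ideal.Quotient.mk (xyIdeal k i) (X 0 ^ a * X 1 ^ c)

lemma mon_eq_zero {a c : ℕ} (h : i ≤ a ∨ i ≤ c) : mon k i a c = 0 := by
  rw [mon, Ideal.Quotient.eq_zero_iff_mem, xyIdeal]
  rcases h with h | h
  · rw [← Nat.add_sub_cancel' h, pow_add, mul_assoc]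
    exact Ideal.mul_mem_right _ _ (Ideal.subset_span (Set.mem_insert _ _))
  · rw [← Nat.add_sub_cancel' h, pow_add, mul_left_comm]
    exact Ideal.mul_mem_right _ _ (Ideal.subset_span (Set.mem_insert_of_mem _ rfl))

lemma zElt_mul_mon (a c : ℕ) :
    zElt k i * mon k i a c = mon k i (a + 1) c + mon k i a (c + 1) := by
  simp only [zElt, mon, ← map_mul, ← map_add]
  ring_nf

lemma mk_monomial (ν : Fin 2 →₀ ℕ) (r : k) :
    Ideal.Quotient.mk (xyIdeal k i) (monomial ν r) = r • mon k i (ν 0) (ν 1) := by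
  rw [monomial_eq, Finsupp.prod_fintype _ _ (by simp), Fin.prod_univ_two, ← smul_eq_C_mul,
    ← Ideal.Quotient.mkₐ_eq_mk k, map_smul]
  rfl

lemma coeff_eq_zero_of_mem_xyIdeal {f : MvPolynomial (Fin 2) k} (hf : f ∈ xyIdeal k i)
    {ν : Fin 2 →₀ ℕ} (h0 : ν 0 < i) (h1 : ν 1 < i) : coeff ν f = 0 := by
  obtain ⟨g, h, rfl⟩ := Ideal.mem_span_pair.mp hf
  rw [coeff_add, X_pow_eq_monomial, X_pow_eq_monomial, coeff_mul_monomial', coeff_mul_monomial',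
    if_neg, if_neg, add_zero] <;>
  · intro hle
    have := Finsupp.single_le_iff.mp hle
    omega

lemma linearIndependent_mon : LinearIndependent k fun q : Fin i × Fin i => mon k i q.1 q.2 := by
  classical
  rw [Fintype.linearIndependent_iff]
  intro g hg q
  let ν : Fin i × Fin i → Fin 2 →₀ ℕ := fun q =>
    Finsupp.single 0 (q.1 : ℕ) + Finsupp.single 1 (q.2 : ℕ)
  have hν0 : ∀ q, ν q 0 = q.1 := fun q => by simp [ν]
  have hν1 : ∀ q, ν q 1 = q.2 := fun q => by simp [ν]
  have hf : ∑ q, monomial (ν q) (g q) ∈ xyIdeal k i := by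
    rw [← Ideal.Quotient.eq_zero_iff_mem, map_sum, ← hg]
    simp only [mk_monomial, hν0, hν1]
  have := coeff_eq_zero_of_mem_xyIdeal hf (ν := ν q) (by simp [hν0]) (by simp [hν1])
  rwa [coeff_sum, Finset.sum_eq_single q _ (by simp), coeff_monomial, if_pos rfl] at this
  intro q' _ hq'
  rw [coeff_monomial, if_neg]
  intro h
  exact hq' (Prod.ext (Fin.ext (by rw [← hν0, h, hν0])) (Fin.ext (by rw [← hν1, h, hν1])))

lemma span_mon : Submodule.span k (Set.range fun q : Fin i × Fin i => mon k i q.1 q.2) = ⊤ := by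
  set S := Submodule.span k (Set.range fun q : Fin i × Fin i => mon k i q.1 q.2)
  have hmon : ∀ a c, mon k i a c ∈ S := by
    intro a c
    by_cases h : a < i ∧ c < i
    · exact Submodule.subset_span ⟨(⟨a, h.1⟩, ⟨c, h.2⟩), rfl⟩
    · rw [mon_eq_zero (by omega)]
      exact S.zero_mem
  refine eq_top_iff.mpr fun u _ => ?_
  obtain ⟨f, rfl⟩ := Ideal.Quotient.mk_surjective u
  rw [f.as_sum, map_sum]
  exact Submodule.sum_mem _ fun ν _ => by
    rw [mk_monomial]
    exact S.smul_mem _ (hmon _ _)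

variable (k i) in
noncomputable def monBasis : Module.Basis (Fin i × Fin i) k (Mxy k i) :=
  .mk linearIndependent_mon span_mon.ge

@[simp]
lemma monBasis_apply (q : Fin i × Fin i) : monBasis k i q = mon k i q.1 q.2 :=
  Module.Basis.mk_apply ..

lemma monBasis_repr_mon {a c : ℕ} (ha : a < i) (hc : c < i) :
    (monBasis k i).repr (mon k i a c) = Finsupp.single (⟨a, ha⟩, ⟨c, hc⟩) 1 := by
  rw [← monBasis_apply (⟨a, ha⟩, ⟨c, hc⟩), Module.Basis.repr_self]

lemma finrank_Mxy : Module.finrank k (Mxy k i) = i * i := by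
  simp [Module.finrank_eq_card_basis (monBasis k i)]

instance : FiniteDimensional k (Mxy k i) := .of_basis (monBasis k i)

variable (k i) in
noncomputable def monLift (f : ℕ → ℕ → Mxy k i) : Module.End k (Mxy k i) :=
  (monBasis k i).constr k fun q => f q.1 q.2

lemma monLift_mon {f : ℕ → ℕ → Mxy k i} (hf : ∀ a c, i ≤ a ∨ i ≤ c → f a c = 0) (a c : ℕ) :
    monLift k i f (mon k i a c) = f a c := by
  by_cases h : a < i ∧ c < i
  · have := (monBasis k i).constr_basis k (fun q => f q.1 q.2) (⟨a, h.1⟩, ⟨c, h.2⟩)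
    rwa [monBasis_apply] at this
  · rw [mon_eq_zero (by omega), map_zero, hf a c (by omega)]

lemma ext_mon {φ ψ : Module.End k (Mxy k i)}
    (h : ∀ a c, a < i → c < i → φ (mon k i a c) = ψ (mon k i a c)) : φ = ψ :=
  (monBasis k i).ext fun q => by simpa using h q.1 q.2 q.1.isLt q.2.isLt

variable (k i) in
/-- On `k[x]/(x^i)`, multiplication by `x` and `x^a ↦ a(i-a) x^(a-1)` are the lowering and
raising operators of the `i`-dimensional irreducible representation of `sl₂`; `zOp` and `eOp`
are their diagonal actions on `M`. -/
noncomputable def eOp : Module.End k (Mxy k i) :=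
  monLift k i fun a c =>
    ((a * (i - a) : ℕ) : k) • mon k i (a - 1) c + ((c * (i - c) : ℕ) : k) • mon k i a (c - 1)

variable (k i) in
noncomputable def hOp : Module.End k (Mxy k i) :=
  monLift k i fun a c => (2 * ((i : k) - 1 - a - c)) • mon k i a c

lemma eOp_mon (a c : ℕ) :
    eOp k i (mon k i a c) = ((a * (i - a) : ℕ) : k) • mon k i (a - 1) c
      + ((c * (i - c) : ℕ) : k) • mon k i a (c - 1) := by
  refine monLift_mon (fun a c h => ?_) a c
  rcases h with h | h
  · rw [Nat.sub_eq_zero_of_le h, mul_zero, Nat.cast_zero, zero_smul, zero_add,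
      mon_eq_zero (Or.inl h), smul_zero]
  · rw [Nat.sub_eq_zero_of_le h, mul_zero, Nat.cast_zero, zero_smul, add_zero,
      mon_eq_zero (Or.inr h), smul_zero]

lemma hOp_mon (a c : ℕ) : hOp k i (mon k i a c) = (2 * ((i : k) - 1 - a - c)) • mon k i a c :=
  monLift_mon (fun a c h => by rw [mon_eq_zero h, smul_zero]) a c

lemma natCast_mul_smul_mon_sub_one_add_one_left (a c m : ℕ) :
    ((a * m : ℕ) : k) • mon k i (a - 1 + 1) c = ((a * m : ℕ) : k) • mon k i a c := by
  rcases a with _ | a <;> simp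

lemma natCast_mul_smul_mon_sub_one_add_one_right (a c m : ℕ) :
    ((c * m : ℕ) : k) • mon k i a (c - 1 + 1) = ((c * m : ℕ) : k) • mon k i a c := by
  rcases c with _ | c <;> simp

lemma lie_eOp_zOp : ⁅eOp k i, zOp k i⁆ = hOp k i := by
  refine ext_mon fun a c ha hc => ?_
  simp only [Ring.lie_def, LinearMap.sub_apply, Module.End.mul_apply, zOp_apply, zElt_mul_mon,
    map_add, eOp_mon, hOp_mon, mul_smul_comm, Nat.add_sub_cancel, smul_add,
    natCast_mul_smul_mon_sub_one_add_one_left, natCast_mul_smul_mon_sub_one_add_one_right]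
  push_cast [Nat.cast_sub (show a + 1 ≤ i by omega), Nat.cast_sub (show c + 1 ≤ i by omega),
    Nat.cast_sub ha.le, Nat.cast_sub hc.le]
  module

lemma lie_hOp_zOp : ⁅hOp k i, zOp k i⁆ = -(2 • zOp k i) := by
  refine ext_mon fun a c _ _ => ?_
  simp only [Ring.lie_def, LinearMap.sub_apply, Module.End.mul_apply, LinearMap.neg_apply,
    LinearMap.smul_apply, zOp_apply, zElt_mul_mon, map_add, hOp_mon, mul_smul_comm, smul_add]
  push_cast
  module

variable (k i) in
noncomputable def homogPart (d : ℕ) : Submodule k (Mxy k i) :=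
  Submodule.span k {u | ∃ a c, a + c = d ∧ mon k i a c = u}

lemma mon_mem_homogPart (a c : ℕ) : mon k i a c ∈ homogPart k i (a + c) :=
  Submodule.subset_span ⟨a, c, rfl, rfl⟩

lemma homogPart_le_comap_zOp (d : ℕ) :
    homogPart k i d ≤ (homogPart k i (d + 1)).comap (zOp k i) := by
  rw [homogPart, Submodule.span_le]
  rintro _ ⟨a, c, rfl, rfl⟩
  rw [SetLike.mem_coe, Submodule.mem_comap, zOp_apply, zElt_mul_mon]
  exact add_mem (by simpa [add_right_comm] using mon_mem_homogPart (k := k) (i := i) (a + 1) c)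
    (mon_mem_homogPart a (c + 1))

lemma zOp_pow_mem_homogPart {d : ℕ} {u : Mxy k i} (hu : u ∈ homogPart k i d) (s : ℕ) :
    (zOp k i ^ s) u ∈ homogPart k i (d + s) := by
  induction s with
  | zero => simpa using hu
  | succ s ih =>
    rw [pow_succ', Module.End.mul_apply, ← add_assoc]
    exact homogPart_le_comap_zOp _ ih

lemma homogPart_eq_bot {d : ℕ} (hd : 2 * i ≤ d + 1) : homogPart k i d = ⊥ := by
  rw [homogPart, Submodule.span_eq_bot]
  rintro _ ⟨a, c, rfl, rfl⟩
  exact mon_eq_zero (by omega)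

lemma homogPart_le_eigenspace (d : ℕ) :
    homogPart k i d ≤ (hOp k i).eigenspace (2 * ((i : k) - 1 - d)) := by
  rw [homogPart, Submodule.span_le]
  rintro _ ⟨a, c, rfl, rfl⟩
  rw [SetLike.mem_coe, Module.End.mem_eigenspace_iff, hOp_mon]
  push_cast
  ring_nf

lemma natCast_ne_zero_of_dvd_factorial (hk : ((2 * i).factorial : k) ≠ 0) {n : ℕ}
    (h : n ∣ (2 * i).factorial) : (n : k) ≠ 0 := by
  obtain ⟨m, hm⟩ := h
  intro hn
  apply hk
  rw [hm, Nat.cast_mul, hn, zero_mul]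

lemma natCast_ne_zero_of_le_two_mul (hk : ((2 * i).factorial : k) ≠ 0) {n : ℕ} (h0 : 0 < n)
    (h : n ≤ 2 * i) : (n : k) ≠ 0 :=
  natCast_ne_zero_of_dvd_factorial hk (Nat.dvd_factorial h0 h)

lemma natCast_inj_of_le_two_mul (hk : ((2 * i).factorial : k) ≠ 0) {m n : ℕ} (hm : m ≤ 2 * i)
    (hn : n ≤ 2 * i) (h : (m : k) = n) : m = n := by
  wlog hle : m ≤ n generalizing m n
  · exact (this hn hm h.symm (by omega)).symm
  by_contra hne
  refine natCast_ne_zero_of_le_two_mul hk (n := n - m) (by omega) (by omega) ?_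
  rw [Nat.cast_sub hle, h, sub_self]

variable (k i) in
/-- These coefficients solve `c (a+1) * (a+1) * (i-1-a) + c a * (i-l-a) * (l+a) = 0`, the
coefficient form of `eOp (primVec l) = 0`. -/
noncomputable def primCoeff (l a : ℕ) : k :=
  (-1) ^ a * (((i - l).choose a * ((l - 1 + a).factorial * (i - 1 - a).factorial) : ℕ) : k)

variable (k i) in
noncomputable def primVec (l : ℕ) : Mxy k i :=
  ∑ a ∈ Finset.range (i - l + 1), primCoeff k i l a • mon k i a (i - l - a)

lemma choose_mul_factorial_mul_factorial_succ {l a : ℕ} (hl : 1 ≤ l) (ha : a < i - l) :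
    (i - l).choose (a + 1) * ((l - 1 + (a + 1)).factorial * (i - 1 - (a + 1)).factorial)
        * ((a + 1) * (i - 1 - a))
      = (i - l).choose a * ((l - 1 + a).factorial * (i - 1 - a).factorial)
        * ((i - l - a) * (l + a)) := by
  have h1 : (i - l).choose (a + 1) * (a + 1) = (i - l).choose a * (i - l - a) :=
    Nat.choose_succ_right_eq _ _
  rw [show l - 1 + (a + 1) = (l - 1 + a) + 1 by omega, Nat.factorial_succ,
    show i - 1 - (a + 1) = i - 2 - a by omega, show i - 1 - a = (i - 2 - a) + 1 by omega,
    Nat.factorial_succ, show l - 1 + a + 1 = l + a by omega]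
  calc _ = ((i - l).choose (a + 1) * (a + 1)) * ((l + a) * ((l - 1 + a).factorial
          * (i - 2 - a + 1) * (i - 2 - a).factorial)) := by ring
    _ = _ := by rw [h1]; ring

lemma primCoeff_succ_mul_add {l a : ℕ} (hl : 1 ≤ l) (ha : a < i - l) :
    primCoeff k i l (a + 1) * (((a + 1) * (i - 1 - a) : ℕ) : k)
      + primCoeff k i l a * (((i - l - a) * (l + a) : ℕ) : k) = 0 := by
  have h := congrArg (Nat.cast : ℕ → k) (choose_mul_factorial_mul_factorial_succ hl ha)
  push_cast at h
  simp only [primCoeff, pow_succ]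
  push_cast
  linear_combination (-((-1 : k) ^ a)) * h

lemma eOp_primVec {l : ℕ} (hl : 1 ≤ l) : eOp k i (primVec k i l) = 0 := by
  simp only [primVec, map_sum, map_smul, eOp_mon, smul_add, smul_smul, Finset.sum_add_distrib]
  rw [Finset.sum_range_succ', Finset.sum_range_succ]
  simp only [Nat.cast_zero, zero_mul, zero_smul, add_zero, Nat.sub_self, mul_zero]
  rw [← Finset.sum_add_distrib]
  refine Finset.sum_eq_zero fun a ha => ?_
  rw [Finset.mem_range] at ha
  rw [Nat.add_sub_cancel, show i - l - (a + 1) = i - l - a - 1 by omega, ← add_smul,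
    show i - (a + 1) = i - 1 - a by omega, show i - (i - l - a) = l + a by omega,
    primCoeff_succ_mul_add hl ha, zero_smul]

lemma primVec_mem_homogPart (l : ℕ) : primVec k i l ∈ homogPart k i (i - l) :=
  Submodule.sum_mem _ fun a ha => Submodule.smul_mem _ _ <| by
    simpa [Nat.add_sub_cancel' (Nat.le_of_lt_succ (Finset.mem_range.mp ha))]
      using mon_mem_homogPart (k := k) (i := i) a (i - l - a)

lemma hOp_primVec {l : ℕ} (hl : l ≤ i) :
    hOp k i (primVec k i l) = (2 * (l : k) - 2) • primVec k i l := by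
  rw [Module.End.mem_eigenspace_iff.mp (homogPart_le_eigenspace _ (primVec_mem_homogPart l)),
    Nat.cast_sub hl]
  ring_nf

lemma swapInv_mon (a c : ℕ) : swapInv k i (mon k i a c) = mon k i c a := by
  have : swapInv k i (mon k i a c) = Ideal.Quotient.mk (xyIdeal k i)
      (rename (Equiv.swap (0 : Fin 2) 1) (X 0 ^ a * X 1 ^ c)) := by
    rw [mon, swapInv, Ideal.Quotient.liftₐ_apply]
    rfl
  rw [this, map_mul, map_pow, map_pow, rename_X, rename_X, Equiv.swap_apply_left,
    Equiv.swap_apply_right, mul_comm, mon]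

lemma primCoeff_reflect {l a : ℕ} (hl : 1 ≤ l) (hli : l ≤ i) (ha : a ≤ i - l) :
    primCoeff k i l (i - l - a) = (-1) ^ (i - l) * primCoeff k i l a := by
  have hsign : (-1 : k) ^ (i - l) = (-1) ^ (i - l - a) * (-1) ^ a := by
    rw [← pow_add, Nat.sub_add_cancel ha]
  have hsq : ((-1 : k) ^ a) ^ 2 = 1 := by rw [← pow_mul, pow_mul', neg_one_sq, one_pow]
  rw [primCoeff, primCoeff, Nat.choose_symm ha, show l - 1 + (i - l - a) = i - 1 - a by omega,
    show i - 1 - (i - l - a) = l - 1 + a by omega, hsign]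
  push_cast
  linear_combination (-((-1 : k) ^ (i - l - a) * ((i - l).choose a * ((i - 1 - a).factorial
    * (l - 1 + a).factorial) : k))) * hsq

lemma swapInv_primVec {l : ℕ} (hl : 1 ≤ l) (hli : l ≤ i) :
    swapInv k i (primVec k i l) = (-1 : k) ^ (i - l) • primVec k i l := by
  simp only [primVec, map_sum, map_smul, swapInv_mon, Finset.smul_sum]
  rw [← Finset.sum_range_reflect]
  refine Finset.sum_congr rfl fun a ha => ?_
  rw [Finset.mem_range] at ha
  rw [show i - l + 1 - 1 - a = i - l - a by omega, show i - l - (i - l - a) = a by omega,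
    primCoeff_reflect hl hli (by omega), smul_smul]

lemma primVec_ne_zero (hk : ((2 * i).factorial : k) ≠ 0) {l : ℕ} (hl : 1 ≤ l) (hli : l ≤ i) :
    primVec k i l ≠ 0 := by
  intro h
  have := congrArg (fun u => (monBasis k i).repr u (⟨0, by omega⟩, ⟨i - l, by omega⟩)) h
  simp only [primVec, map_sum, map_smul, Finsupp.coe_finsetSum, Finset.sum_apply,
    Finsupp.smul_apply, map_zero, Finsupp.coe_zero, Pi.zero_apply] at this
  rw [Finset.sum_eq_single 0, monBasis_repr_mon (by omega) (by omega)] at this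
  · simp only [Nat.sub_zero, Finsupp.single_eq_same, smul_eq_mul, mul_one, primCoeff, pow_zero,
      one_mul, Nat.choose_zero_right, add_zero] at this
    exact natCast_ne_zero_of_dvd_factorial hk
      ((Nat.factorial_mul_factorial_dvd_factorial_add (l - 1) (i - 1)).trans
        (Nat.factorial_dvd_factorial (by omega))) (by exact_mod_cast this)
  · intro a ha ha0
    rw [Finset.mem_range] at ha
    rw [monBasis_repr_mon (by omega) (by omega), Finsupp.single_apply, if_neg, smul_zero]
    intro hq
    exact ha0 (congrArg Fin.val (Prod.ext_iff.mp hq).1)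
  · simp

lemma linearIndependent_primVec (hk : ((2 * i).factorial : k) ≠ 0) :
    LinearIndependent k fun l : Finset.Icc 1 i => primVec k i l := by
  refine Module.End.eigenvectors_linearIndependent' (hOp k i)
    (fun l : Finset.Icc 1 i => 2 * (l : k) - 2) (fun l l' h => ?_) _ fun l => ?_
  · have hl := Finset.mem_Icc.mp l.2
    have hl' := Finset.mem_Icc.mp l'.2
    refine Subtype.ext (natCast_inj_of_le_two_mul hk (by omega) (by omega) ?_)
    have h2 : (2 : k) ≠ 0 := by exact_mod_cast natCast_ne_zero_of_le_two_mul hk two_pos (by omega)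
    simpa [h2] using h
  · have hl := Finset.mem_Icc.mp l.2
    exact Module.End.hasEigenvector_iff.mpr
      ⟨Module.End.mem_eigenspace_iff.mpr (hOp_primVec hl.2), primVec_ne_zero hk hl.1 hl.2⟩

lemma zOp_pow_primVec_eq_zero (hk : ((2 * i).factorial : k) ≠ 0) {l : ℕ} (hl : 1 ≤ l)
    (hli : l ≤ i) : (zOp k i ^ (2 * l - 1)) (primVec k i l) = 0 := by
  refine sl2_eq_zero_of_pow_apply_eq_zero (lie_eOp_zOp (k := k) (i := i)) lie_hOp_zOp
    (w := -2 * l) (N := i - l) ?_ ?_ ?_ ?_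
  · have := sl2_e_pow_succ_apply (lie_eOp_zOp (k := k) (i := i)) lie_hOp_zOp (eOp_primVec hl)
      (hOp_primVec hli) (2 * l - 2)
    rw [show 2 * l - 2 + 1 = 2 * l - 1 by omega, Nat.cast_sub (by omega : 2 ≤ 2 * l)] at this
    simpa using this
  · rw [sl2_h_pow_apply (lie_hOp_zOp (k := k) (i := i)) (hOp_primVec hli),
      Nat.cast_sub (by omega : 1 ≤ 2 * l)]
    push_cast
    ring_nf
  · rw [← Module.End.mul_apply, ← pow_add]
    have := zOp_pow_mem_homogPart (primVec_mem_homogPart (k := k) (i := i) l)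
      (i - l + (2 * l - 1))
    rwa [homogPart_eq_bot (by omega), Submodule.mem_bot] at this
  · intro s hs
    have : ((s + 1 : ℕ) : k) * ((2 * l + s : ℕ) : k) ≠ 0 :=
      mul_ne_zero (natCast_ne_zero_of_le_two_mul hk (by omega) (by omega))
        (natCast_ne_zero_of_le_two_mul hk (by omega) (by omega))
    contrapose! this
    push_cast
    linear_combination -this

lemma linearIndependent_chains (hk : ((2 * i).factorial : k) ≠ 0) :
    LinearIndependent k fun x : (l : Finset.Icc 1 i) × Fin (2 * l - 1) =>
      (zOp k i ^ (x.2 : ℕ)) (primVec k i x.1) := by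
  refine sl2_linearIndependent_pow_apply (lie_eOp_zOp (k := k) (i := i)) lie_hOp_zOp
    (v := fun l : Finset.Icc 1 i => primVec k i l) (w := fun l => 2 * (l : k) - 2)
    (n := fun l => 2 * l - 1) (linearIndependent_primVec hk)
    (fun l => eOp_primVec (Finset.mem_Icc.mp l.2).1)
    (fun l => hOp_primVec (Finset.mem_Icc.mp l.2).2) fun l s hs => ?_
  have hl := Finset.mem_Icc.mp l.2
  have : ((s + 1 : ℕ) : k) * ((2 * l - 2 - s : ℕ) : k) ≠ 0 :=
    mul_ne_zero (natCast_ne_zero_of_le_two_mul hk (by omega) (by omega))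
      (natCast_ne_zero_of_le_two_mul hk (by omega) (by omega))
  rw [Nat.cast_sub (by omega), Nat.cast_sub (by omega)] at this
  push_cast at this
  exact this

lemma card_chains : Fintype.card ((l : Finset.Icc 1 i) × Fin (2 * l - 1)) = i * i := by
  rw [Fintype.card_sigma]
  simp only [Fintype.card_fin]
  rw [Finset.sum_coe_sort (Finset.Icc 1 i) fun l => 2 * l - 1]
  induction i with
  | zero => simp
  | succ n ih =>
    rw [Finset.sum_Icc_succ_top (by omega), ih, show 2 * (n + 1) - 1 = 2 * n + 1 by omega]
    ring

variable (k i) in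
noncomputable def chainBasis (hk : ((2 * i).factorial : k) ≠ 0) :
    Module.Basis ((l : Finset.Icc 1 i) × Fin (2 * l - 1)) k (Mxy k i) :=
  basisOfLinearIndependentOfCardEqFinrank' _ (linearIndependent_chains hk)
    (by rw [card_chains, finrank_Mxy])

lemma chainBasis_apply (hk : ((2 * i).factorial : k) ≠ 0)
    (x : (l : Finset.Icc 1 i) × Fin (2 * l - 1)) :
    chainBasis k i hk x = (Polynomial.X ^ (x.2 : ℕ) : k[X]) • primVec k i x.1 := by
  rw [chainBasis, coe_basisOfLinearIndependentOfCardEqFinrank', zOp_pow_apply]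

lemma swapInv_chainBasis (hk : ((2 * i).factorial : k) ≠ 0)
    (x : (l : Finset.Icc 1 i) × Fin (2 * l - 1)) :
    swapInv k i (chainBasis k i hk x) = (-1 : k) ^ (i - x.1) • chainBasis k i hk x := by
  have hl := Finset.mem_Icc.mp x.1.2
  rw [chainBasis_apply, swapInv_smul, swapInv_primVec hl.1 hl.2, smul_comm]

theorem nonempty_linearEquiv_directSum_cyclic (hk : ((2 * i).factorial : k) ≠ 0) (ε : k)
    (π : ℕ → Prop) (hπ : ∀ l, 1 ≤ l → l ≤ i → (π l ↔ (-1 : k) ^ (i - l) = ε))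
    (N : Submodule k[X] (Mxy k i)) (hN : ∀ m, m ∈ N ↔ swapInv k i m = ε • m) :
    Nonempty (N ≃ₗ[k[X]] DirectSum {j : ℕ // 1 ≤ j ∧ j ≤ i ∧ π j} fun j => cyclic k j.1) := by
  classical
  let J := {j : ℕ // 1 ≤ j ∧ j ≤ i ∧ π j}
  let incl : J → Finset.Icc 1 i := fun j => ⟨j.1, Finset.mem_Icc.mpr ⟨j.2.1, j.2.2.1⟩⟩
  have hann : ∀ j : J, (Polynomial.X ^ (2 * j.1 - 1) : k[X]) • primVec k i j.1 = 0 := fun j => by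
    rw [← zOp_pow_apply, zOp_pow_primVec_eq_zero hk j.2.1 j.2.2.1]
  have hli : LinearIndependent k fun x : (j : J) × Fin (2 * j.1 - 1) =>
      (Polynomial.X ^ (x.2 : ℕ) : k[X]) • primVec k i x.1 := by
    have hincl : Function.Injective incl := fun j j' h =>
      Subtype.ext (congrArg (fun l : Finset.Icc 1 i => (l : ℕ)) h)
    have := (chainBasis k i hk).linearIndependent.comp (Sigma.map incl fun _ => id)
      (hincl.sigma_map fun _ => Function.injective_id)
    rwa [show ⇑(chainBasis k i hk) = _ from funext (chainBasis_apply hk)] at this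
  let Φ := cyclicSum (fun j : J => primVec k i j.1) (fun j => 2 * j.1 - 1) hann
  have hrange : LinearMap.range Φ = N := by
    rw [range_cyclicSum]
    apply le_antisymm
    · rw [Submodule.span_le]
      rintro _ ⟨j, rfl⟩
      exact (hN _).mpr (by rw [swapInv_primVec j.2.1 j.2.2.1, (hπ _ j.2.1 j.2.2.1).mp j.2.2.2])
    · intro m hm
      have := (chainBasis k i hk).mem_span_image_of_apply_eq_smul
        (σ := (swapInv k i).toLinearMap) (swapInv_chainBasis hk) ((hN m).mp hm)
      refine (Submodule.span_le.mpr ?_ :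
        _ ≤ (Submodule.span k[X] (Set.range fun j : J => primVec k i j.1)).restrictScalars k) this
      rintro _ ⟨x, hx, rfl⟩
      have hl := Finset.mem_Icc.mp x.1.2
      rw [chainBasis_apply, SetLike.mem_coe, Submodule.restrictScalars_mem]
      refine Submodule.smul_mem _ _ (Submodule.subset_span ?_)
      exact ⟨⟨x.1, hl.1, hl.2, (hπ _ hl.1 hl.2).mpr hx⟩, rfl⟩
  exact ⟨((LinearEquiv.ofInjective Φ (injective_cyclicSum hann hli)).trans
    (LinearEquiv.ofEq _ _ hrange)).symm⟩

end VerlindeSymmetry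

open VerlindeSymmetry in
theorem symmetric_antisymmetric_decomposition_of_truncated_polynomials_general
    (k : Type*) [Field k] (p : ℕ) (hchar : CharP k p)
    (i : ℕ) (hi2 : i ≤ (p - 1) / 2) :
    Nonempty ((MS k i) ≃ₗ[Polynomial k]
        DirectSum {j : ℕ // 1 ≤ j ∧ j ≤ i ∧ j % 2 = i % 2} (fun j => cyclic k j.1))
    ∧ Nonempty ((MA k i) ≃ₗ[Polynomial k]
        DirectSum {j : ℕ // 1 ≤ j ∧ j ≤ i ∧ j % 2 ≠ i % 2} (fun j => cyclic k j.1)) := by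
  have hk : ((2 * i).factorial : k) ≠ 0 := by
    rw [Ne, CharP.cast_eq_zero_iff k p]
    rcases CharP.char_is_prime_or_zero k p with hp | rfl
    · have := hp.two_le
      rw [hp.dvd_factorial]
      omega
    · simpa using (2 * i).factorial_ne_zero
  have hparity : ∀ l, l ≤ i → (Even (i - l) ↔ l % 2 = i % 2) := fun l hli => by
    rw [Nat.even_sub hli, Nat.even_iff, Nat.even_iff]
    omega
  have hneg : ∀ l, 1 ≤ l → l ≤ i → (-1 : k) ≠ 1 := fun l hl hli h =>
    natCast_ne_zero_of_le_two_mul hk (n := 2) two_pos (by omega)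
      (by push_cast; linear_combination -h)
  refine ⟨nonempty_linearEquiv_directSum_cyclic hk 1 (fun j => j % 2 = i % 2) (fun l hl hli => ?_)
      (MS k i) (fun m => by rw [one_smul]; rfl),
    nonempty_linearEquiv_directSum_cyclic hk (-1) (fun j => j % 2 ≠ i % 2) (fun l hl hli => ?_)
      (MA k i) (fun m => by rw [neg_one_smul]; rfl)⟩
  · rw [neg_one_pow_eq_one_iff_even (hneg l hl hli), hparity l hli]
  · rw [neg_one_pow_eq_neg_one_iff_odd (hneg l hl hli), ← Nat.not_even_iff_odd, hparity l hli]

open VerlindeSymmetry in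
/-- Let `k` have odd prime characteristic `p` and `1 ≤ i ≤ (p-1)/2`.  For
`M = k[x,y]/(x^i,y^i)` viewed as a `k[X]`-module with `X` acting by multiplication by `x + y`,
and `M = M_S ⊕ M_A` the eigenspace decomposition under the swap involution, there are
`k[X]`-module isomorphisms
`M_S ≅ ⊕_{1 ≤ j ≤ i, j ≡ i [2]} k[X]/(X^(2j-1))` and
`M_A ≅ ⊕_{1 ≤ j ≤ i, j ≢ i [2]} k[X]/(X^(2j-1))`. -/
theorem symmetric_antisymmetric_decomposition_of_truncated_polynomials
    (k : Type*) [Field k] (p : ℕ) (hp : p.Prime) (hodd : Odd p) (hchar : CharP k p)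
    (i : ℕ) (hi1 : 1 ≤ i) (hi2 : i ≤ (p - 1) / 2) :
    Nonempty ((MS k i) ≃ₗ[Polynomial k]
        DirectSum {j : ℕ // 1 ≤ j ∧ j ≤ i ∧ j % 2 = i % 2} (fun j => cyclic k j.1))
    ∧ Nonempty ((MA k i) ≃ₗ[Polynomial k]
        DirectSum {j : ℕ // 1 ≤ j ∧ j ≤ i ∧ j % 2 ≠ i % 2} (fun j => cyclic k j.1)) :=
  symmetric_antisymmetric_decomposition_of_truncated_polynomials_general k p hchar i hi2
end

section
/- Let k be a field, V a k-vector space, T(V) its tensor algebra with canonical linear inclusion ι : V → T(V), regarded as a Lie algebra via the commutator ⁅a,b⁆ = ab − ba, and let 𝔣 be the Lie subalgebra of T(V) generated by ι(V). Then the Lie algebra homomorphism 𝔣 → T(V) given by the inclusion induces, via the universal property of the universal enveloping algebra, an isomorphism of associative k-algebras U(𝔣) ≅ T(V). In particular 𝔣 satisfies the Poincaré–Birkhoff–Witt property. -/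
attribute [local instance 100] LieRing.ofAssociativeRing

/-! The inclusion `𝔣 ↪ T(V)` induces `U(𝔣) → T(V)`; in the other direction the universal
property of `T(V)` gives `T(V) → U(𝔣)`, `ι v ↦ ι v`. Composing the two is the identity on the
generators of `T(V)` and, since `T(V) → U(𝔣)` is a Lie homomorphism sending the generators of
`𝔣` to their images in `U(𝔣)`, also on `𝔣`, which generates `U(𝔣)`. -/

theorem LieSubalgebra.lieSpan_hom_ext {R L L' : Type*} [CommRing R] [LieRing L] [LieAlgebra R L]
    [LieRing L'] [LieAlgebra R L'] {s : Set L} {f g : lieSpan R L s →ₗ⁅R⁆ L'}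
    (h : ∀ x (hx : x ∈ s), f ⟨x, subset_lieSpan hx⟩ = g ⟨x, subset_lieSpan hx⟩) : f = g := by
  ext ⟨x, hx⟩
  induction hx using lieSpan_induction with
  | mem x hx => exact h x hx
  | zero => exact (map_zero f).trans (map_zero g).symm
  | add x y _ _ hx hy =>
    exact (map_add f ⟨x, _⟩ ⟨y, _⟩).trans ((congrArg₂ _ hx hy).trans (map_add g _ _).symm)
  | smul r x _ hx =>
    exact (map_smul f r ⟨x, _⟩).trans ((congrArg _ hx).trans (map_smul g r _).symm)
  | lie x y _ _ hx hy =>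
    exact (f.map_lie ⟨x, _⟩ ⟨y, _⟩).trans ((congrArg₂ _ hx hy).trans (g.map_lie _ _).symm)

namespace TensorAlgebra

variable (R M : Type*) [CommRing R] [AddCommGroup M] [Module R M]

abbrev freeLieSubalgebra : LieSubalgebra R (TensorAlgebra R M) :=
  LieSubalgebra.lieSpan R (TensorAlgebra R M) (Set.range (ι R))

def ιFreeLie : M →ₗ[R] freeLieSubalgebra R M :=
  LinearMap.codRestrict _ (ι R) fun m ↦ LieSubalgebra.subset_lieSpan ⟨m, rfl⟩

def toUniversalEnveloping :
    TensorAlgebra R M →ₐ[R] UniversalEnvelopingAlgebra R (freeLieSubalgebra R M) :=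
  lift R ((UniversalEnvelopingAlgebra.ι R).toLinearMap ∘ₗ ιFreeLie R M)

variable {R M}

@[simp]
theorem coe_ιFreeLie (m : M) : (ιFreeLie R M m : TensorAlgebra R M) = ι R m :=
  rfl

@[simp]
theorem toUniversalEnveloping_ι (m : M) :
    toUniversalEnveloping R M (ι R m) = UniversalEnvelopingAlgebra.ι R (ιFreeLie R M m) :=
  lift_ι_apply _ m

theorem toUniversalEnveloping_coe (x : freeLieSubalgebra R M) :
    toUniversalEnveloping R M x = UniversalEnvelopingAlgebra.ι R x := by
  have hLie : (toUniversalEnveloping R M).toLieHom.comp (freeLieSubalgebra R M).incl =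
      UniversalEnvelopingAlgebra.ι R :=
    LieSubalgebra.lieSpan_hom_ext fun _ ⟨m, hm⟩ ↦ hm ▸ toUniversalEnveloping_ι m
  exact LieHom.congr_fun hLie x

theorem lift_incl_comp_toUniversalEnveloping :
    (UniversalEnvelopingAlgebra.lift R (freeLieSubalgebra R M).incl).comp
      (toUniversalEnveloping R M) = AlgHom.id R (TensorAlgebra R M) := by
  ext m
  simp

theorem toUniversalEnveloping_comp_lift_incl :
    (toUniversalEnveloping R M).comp
      (UniversalEnvelopingAlgebra.lift R (freeLieSubalgebra R M).incl) =
      AlgHom.id R (UniversalEnvelopingAlgebra R (freeLieSubalgebra R M)) := by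
  refine UniversalEnvelopingAlgebra.hom_ext R (LieHom.ext fun x ↦ ?_)
  simp [toUniversalEnveloping_coe]

def universalEnvelopingFreeLieEquiv :
    UniversalEnvelopingAlgebra R (freeLieSubalgebra R M) ≃ₐ[R] TensorAlgebra R M :=
  AlgEquiv.ofAlgHom _ (toUniversalEnveloping R M) lift_incl_comp_toUniversalEnveloping
    toUniversalEnveloping_comp_lift_incl

end TensorAlgebra

/-- Let `𝔣` be the Lie subalgebra of the tensor algebra `T(V)` (with commutator bracket)
generated by the image of `V`.  The algebra homomorphism `U(𝔣) → T(V)` induced, via the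
universal property of the universal enveloping algebra, by the inclusion `𝔣 ↪ T(V)` is an
isomorphism of associative algebras.  In particular, `𝔣` has the Poincaré–Birkhoff–Witt
property. -/
theorem universal_enveloping_of_free_lie_algebra_iso
    (k : Type*) [Field k] (V : Type*) [AddCommGroup V] [Module k V] :
    Function.Bijective
      (UniversalEnvelopingAlgebra.lift k
        (LieSubalgebra.incl (LieSubalgebra.lieSpan k (TensorAlgebra k V)
          (Set.range (TensorAlgebra.ι k (M := V)))))) :=
  (TensorAlgebra.universalEnvelopingFreeLieEquiv (R := k) (M := V)).bijective
end

section
/- With the data (k, 𝔛, V, d) and the auxiliary Lie algebra g̃ as in the context, let W be any 𝔛-module. Define operators on T(V) ⊗_k W as follows: for x ∈ 𝔛, η_X(x)(u ⊗ w) = (x·u) ⊗ w + u ⊗ (x·w), where x acts on T(V) as the unique derivation with x·ι(v) = ι(x·v); for v ∈ V, η₊(v)(u ⊗ w) = (ι(v)u) ⊗ w. Then: (1) there is a unique linear map η₋ : V* → End_k(T(V) ⊗ W) such that for all f ∈ V*, w ∈ W, v ∈ V, n ≥ 0 and u ∈ V^{⊗n} ⊆ T(V): η₋(f)(1 ⊗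 w) = 0 and η₋(f)((ι(v)u) ⊗ w) = −η_X(d(v⊗f))(u ⊗ w) + η₊(v)(η₋(f)(u ⊗ w)); (2) there exists a Lie algebra homomorphism Φ : g̃ → End_k(T(V) ⊗ W) (the codomain with commutator bracket) such that Φ sends the image of x ∈ 𝔛 to η_X(x), the image of v ∈ V to η₊(v), and the image of f ∈ V* to η₋(f). -/
/-! ## Semidirect product of Lie algebras along an action by derivations -/

variable (R : Type*) [CommRing R] (L : Type*) [LieRing L] [LieAlgebra R L]
  (M : Type*) [LieRing M] [LieAlgebra R M]

/-- Type synonym for the semidirect product of Lie algebras. -/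
@[nolint unusedArguments]
def LieSemidirectProduct (_δ : M →ₗ⁅R⁆ LieDerivation R L L) : Type _ := L × M

namespace LieSemidirectProduct

variable {R L M}
variable (δ : M →ₗ⁅R⁆ LieDerivation R L L)

instance : AddCommGroup (LieSemidirectProduct R L M δ) :=
  inferInstanceAs (AddCommGroup (L × M))

instance : Module R (LieSemidirectProduct R L M δ) :=
  inferInstanceAs (Module R (L × M))

/-- Build an element of the semidirect product. -/
def mk (t : L) (x : M) : LieSemidirectProduct R L M δ := (t, x)

@[simp] lemma mk_fst (t : L) (x : M) : (mk δ t x).1 = t := rfl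
@[simp] lemma mk_snd (t : L) (x : M) : (mk δ t x).2 = x := rfl

instance : LieRing (LieSemidirectProduct R L M δ) where
  bracket p q := (⁅p.1, q.1⁆ + δ p.2 q.1 - δ q.2 p.1, ⁅p.2, q.2⁆)
  add_lie p q r := by
    show Prod.mk _ _ = Prod.mk _ _ + Prod.mk _ _
    erw [Prod.mk_add_mk]
    refine congrArg₂ Prod.mk ?_ (add_lie _ _ _)
    show ⁅p.1 + q.1, r.1⁆ + δ (p.2 + q.2) r.1 - δ r.2 (p.1 + q.1) = _
    simp only [add_lie, LieDerivation.add_apply, map_add]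
    abel
  lie_add p q r := by
    show Prod.mk _ _ = Prod.mk _ _ + Prod.mk _ _
    erw [Prod.mk_add_mk]
    refine congrArg₂ Prod.mk ?_ (lie_add _ _ _)
    show ⁅p.1, q.1 + r.1⁆ + δ p.2 (q.1 + r.1) - δ (q.2 + r.2) p.1 = _
    simp only [lie_add, LieDerivation.add_apply, map_add]
    abel
  lie_self p := by
    show Prod.mk _ _ = (0 : L × M)
    rw [Prod.mk_eq_zero]
    constructor
    · show ⁅p.1, p.1⁆ + δ p.2 p.1 - δ p.2 p.1 = 0
      simp
    · exact lie_self _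
  leibniz_lie p q r := by
    show Prod.mk _ _ = Prod.mk _ _ + Prod.mk _ _
    erw [Prod.mk_add_mk]
    refine congrArg₂ Prod.mk ?_ (leibniz_lie _ _ _)
    show ⁅p.1, ⁅q.1, r.1⁆ + δ q.2 r.1 - δ r.2 q.1⁆ + δ p.2 (⁅q.1, r.1⁆ + δ q.2 r.1 - δ r.2 q.1)
        - δ ⁅q.2, r.2⁆ p.1
      = (⁅⁅p.1, q.1⁆ + δ p.2 q.1 - δ q.2 p.1, r.1⁆ + δ ⁅p.2, q.2⁆ r.1
          - δ r.2 (⁅p.1, q.1⁆ + δ p.2 q.1 - δ q.2 p.1))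
        + (⁅q.1, ⁅p.1, r.1⁆ + δ p.2 r.1 - δ r.2 p.1⁆ + δ q.2 (⁅p.1, r.1⁆ + δ p.2 r.1 - δ r.2 p.1)
          - δ ⁅p.2, r.2⁆ q.1)
    have hskew : ⁅δ r.2 p.1, q.1⁆ = -⁅q.1, δ r.2 p.1⁆ := (lie_skew _ _).symm
    simp only [lie_add, add_lie, lie_sub, sub_lie, map_add, map_sub,
      LieHom.map_lie, LieDerivation.lie_apply, LieDerivation.apply_lie_eq_add, hskew,
      LieDerivation.add_apply, LieDerivation.sub_apply]
    rw [leibniz_lie p.1 q.1 r.1]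
    abel

instance : LieAlgebra R (LieSemidirectProduct R L M δ) where
  lie_smul c p q := by
    show Prod.mk _ _ = c • Prod.mk _ _
    erw [Prod.smul_mk]
    refine congrArg₂ Prod.mk ?_ (lie_smul _ _ _)
    show ⁅p.1, c • q.1⁆ + δ p.2 (c • q.1) - δ (c • q.2) p.1 = _
    simp only [lie_smul, LieDerivation.smul_apply, smul_add, smul_sub, map_smul]

@[simp] lemma bracket_def (p q : LieSemidirectProduct R L M δ) :
    ⁅p, q⁆ = (mk δ (⁅p.1, q.1⁆ + δ p.2 q.1 - δ q.2 p.1) ⁅p.2, q.2⁆) := rfl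

/-- The canonical inclusion of `L` into the semidirect product. -/
def inl : L →ₗ⁅R⁆ LieSemidirectProduct R L M δ where
  toFun t := mk δ t 0
  map_add' t s := by
    show Prod.mk _ _ = Prod.mk _ _ + Prod.mk _ _
    erw [Prod.mk_add_mk, add_zero]
  map_smul' c t := by
    show Prod.mk _ _ = c • Prod.mk _ _
    erw [Prod.smul_mk, smul_zero]
  map_lie' {t s} := by
    show mk δ ⁅t, s⁆ 0 = mk δ (⁅t, s⁆ + δ 0 s - δ 0 t) ⁅(0 : M), (0 : M)⁆
    simp [mk]; rfl

/-- The canonical inclusion of `M` into the semidirect product. -/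
def inr : M →ₗ⁅R⁆ LieSemidirectProduct R L M δ where
  toFun x := mk δ 0 x
  map_add' x y := by
    show Prod.mk _ _ = Prod.mk _ _ + Prod.mk _ _
    erw [Prod.mk_add_mk, add_zero]
  map_smul' c x := by
    show Prod.mk _ _ = c • Prod.mk _ _
    erw [Prod.smul_mk, smul_zero]
  map_lie' {x y} := by
    show mk δ 0 ⁅x, y⁆ = mk δ (⁅(0 : L), (0 : L)⁆ + δ x 0 - δ y 0) ⁅x, y⁆
    simp [mk]; rfl

end LieSemidirectProduct

/-! ## The contragredient construction -/

attribute [local instance 100] LieRing.ofAssociativeRing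

open TensorProduct

namespace Contragredient

variable (k : Type*) [Field k]
variable {X : Type*} [LieRing X] [LieAlgebra k X]
variable (V : Type*) [AddCommGroup V] [Module k V]

/-- The action of `X` on the dual of `V` induced by a representation `φ`:
`(x · f) v = - f (x · v)`. -/
def dualAct (φ : X →ₗ⁅k⁆ Module.End k V) (x : X) (f : Module.Dual k V) :
    Module.Dual k V :=
  -(f ∘ₗ φ x)

/-- The free Lie algebra on `V ⊕ V*`: the Lie subalgebra of the tensor algebra
(with commutator bracket) generated by `V ⊕ V*`. -/
def F : LieSubalgebra k (TensorAlgebra k (V × Module.Dual k V)) :=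
  LieSubalgebra.lieSpan k _ (Set.range (TensorAlgebra.ι k))

/-- The canonical inclusion of `V ⊕ V*` into the free Lie algebra on it. -/
def ιF (w : V × Module.Dual k V) : F k V :=
  ⟨TensorAlgebra.ι k w, LieSubalgebra.subset_lieSpan ⟨w, rfl⟩⟩

variable {V}
variable (δ : X →ₗ⁅k⁆ LieDerivation k (F k V) (F k V))
variable (d : V ⊗[k] Module.Dual k V →ₗ[k] X)

/-- The semidirect product `FLie(V ⊕ V*) ⋊ X`. -/
abbrev SD := LieSemidirectProduct k (F k V) X δ

/-- The defining relations of the auxiliary contragredient Lie algebra. -/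
def rel : Set (SD k δ) :=
  { p | ∃ (v : V) (f : Module.Dual k V),
      p = LieSemidirectProduct.mk δ ⁅ιF k V (v, 0), ιF k V (0, f)⁆ (-(d (v ⊗ₜ[k] f))) }

/-- The ideal of relations. -/
def I0 : LieIdeal k (SD k δ) := LieSubmodule.lieSpan k _ (rel k δ d)

/-- The auxiliary contragredient Lie algebra `g̃(ρ, d)`. -/
abbrev gt := SD k δ ⧸ I0 k δ d

/-- The quotient map onto the auxiliary contragredient Lie algebra. -/
def π : SD k δ →ₗ⁅k⁆ gt k δ d :=
  { (I0 k δ d).toSubmodule.mkQ with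
    map_lie' := fun {_ _} => rfl }

/-- The canonical map from `X` to `g̃`. -/
def ι₀ : X →ₗ⁅k⁆ gt k δ d := (π k δ d).comp (LieSemidirectProduct.inr δ)

/-- The canonical map from `V` to `g̃`. -/
def gtV (v : V) : gt k δ d := π k δ d (LieSemidirectProduct.mk δ (ιF k V (v, 0)) 0)

/-- The canonical map from `V*` to `g̃`. -/
def gtD (f : Module.Dual k V) : gt k δ d :=
  π k δ d (LieSemidirectProduct.mk δ (ιF k V (0, f)) 0)

/-- The positive subalgebra `n₊` of `g̃`: the Lie subalgebra generated by the image of `V`. -/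
def nPlus : LieSubalgebra k (gt k δ d) :=
  LieSubalgebra.lieSpan k _ (Set.range (gtV k δ d))

/-- The negative subalgebra `n₋` of `g̃`: the Lie subalgebra generated by the image of `V*`. -/
def nMinus : LieSubalgebra k (gt k δ d) :=
  LieSubalgebra.lieSpan k _ (Set.range (gtD k δ d))

universe w

/-- `X` has enough modules: for every nonzero `x : X` there is a representation of `X`
on which `x` acts nontrivially. -/
def HasEnoughModules (k : Type*) [Field k] (X : Type*) [LieRing X] [LieAlgebra k X] : Prop :=
  ∀ x : X, x ≠ 0 →
    ∃ (W : Type w) (_ : AddCommGroup W) (_ : Module k W)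
      (ρW : X →ₗ⁅k⁆ Module.End k W), ρW x ≠ 0

end Contragredient

/-!
Take `η₋(f)(u ⊗ w) = S(u)(1 ⊗ w)`, where `S` is the derivation of `T(V)` into `End(T(V) ⊗ W)`,
twisted by left multiplication, that sends `v` to `-η_X(d(v ⊗ f))`. The recursion says
`⁅η₋(f), η₊(v)⁆ = -η_X(d(v ⊗ f))`, and an operator that kills `1 ⊗ W` and commutes with all
`η₊(v)` vanishes. This gives uniqueness, linearity in `f`, and `⁅η_X(x), η₋(f)⁆ = η₋(x·f)`: by
Jacobi and the equivariance of `d`, the difference of the two sides commutes with every `η₊(v)`.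
With these relations the algebra map `T(V ⊕ V*) → End(T(V) ⊗ W)` given by `η₊ + η₋` intertwines
`δ x` with `ad η_X(x)` on generators, hence on all of `FLie(V ⊕ V*)`; together with `η_X` it is
then a Lie morphism on the semidirect product, and it kills the relations of `g̃`.
-/

namespace LieSemidirectProduct

variable {R L M} {A : Type*} [LieRing A] [LieAlgebra R A] {δ : M →ₗ⁅R⁆ LieDerivation R L L}

def lift (α : L →ₗ⁅R⁆ A) (β : M →ₗ⁅R⁆ A) (h : ∀ m l, α (δ m l) = ⁅β m, α l⁆) :
    LieSemidirectProduct R L M δ →ₗ⁅R⁆ A where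
  toFun p := α p.1 + β p.2
  map_add' p q := by
    change α (p.1 + q.1) + β (p.2 + q.2) = _
    rw [map_add, map_add]
    abel
  map_smul' r p := by
    change α (r • p.1) + β (r • p.2) = _
    rw [map_smul, map_smul, smul_add, RingHom.id_apply]
  map_lie' {p q} := by
    simp only [bracket_def, mk_fst, mk_snd, map_add, map_sub, LieHom.map_lie, h, add_lie, lie_add]
    rw [← lie_skew (β q.2)]
    abel

@[simp]
lemma lift_mk (α : L →ₗ⁅R⁆ A) (β : M →ₗ⁅R⁆ A) (h : ∀ m l, α (δ m l) = ⁅β m, α l⁆)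
    (t : L) (x : M) : lift α β h (mk δ t x) = α t + β x :=
  rfl

end LieSemidirectProduct

namespace LieIdeal

variable {R L} {L' : Type*} [LieRing L'] [LieAlgebra R L']

def liftQ (I : LieIdeal R L) (f : L →ₗ⁅R⁆ L') (h : I ≤ f.ker) : L ⧸ I →ₗ⁅R⁆ L' where
  toLinearMap := I.toSubmodule.liftQ f.toLinearMap fun x hx => LieHom.mem_ker.mp (h hx)
  map_lie' {a b} := by
    obtain ⟨a, rfl⟩ := Submodule.Quotient.mk_surjective _ a
    obtain ⟨b, rfl⟩ := Submodule.Quotient.mk_surjective _ b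
    exact f.map_lie a b

end LieIdeal

namespace LieDerivation

open LieSubalgebra

variable {R L} {A : Type*} [LieRing A] [LieAlgebra R A]

theorem map_apply_eq_lie_of_lieSpan {s : Set L}
    (D : LieDerivation R (lieSpan R L s) (lieSpan R L s))
    (α : lieSpan R L s →ₗ⁅R⁆ A) (a : A)
    (h : ∀ x (hx : x ∈ s), α (D ⟨x, subset_lieSpan hx⟩) = ⁅a, α ⟨x, subset_lieSpan hx⟩⁆)
    (y : lieSpan R L s) : α (D y) = ⁅a, α y⁆ := by
  obtain ⟨y, hy⟩ := y
  induction hy using lieSpan_induction with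
  | mem x hx => exact h x hx
  | zero =>
    change α (D 0) = ⁅a, α 0⁆
    rw [map_zero, map_zero, lie_zero]
  | add x y hx hy ihx ihy =>
    change α (D ((⟨x, hx⟩ : lieSpan R L s) + ⟨y, hy⟩))
      = ⁅a, α ((⟨x, hx⟩ : lieSpan R L s) + ⟨y, hy⟩)⁆
    rw [map_add, map_add, ihx, ihy, map_add, lie_add]
  | smul r x hx ih =>
    change α (D (r • (⟨x, hx⟩ : lieSpan R L s))) = ⁅a, α (r • (⟨x, hx⟩ : lieSpan R L s))⁆
    rw [map_smul, map_smul, ih, map_smul, lie_smul]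
  | lie x y hx hy ihx ihy =>
    change α (D ⁅(⟨x, hx⟩ : lieSpan R L s), ⟨y, hy⟩⁆)
      = ⁅a, α ⁅(⟨x, hx⟩ : lieSpan R L s), ⟨y, hy⟩⁆⁆
    rw [apply_lie_eq_add, map_add, LieHom.map_lie, LieHom.map_lie, LieHom.map_lie, ihx, ihy,
      leibniz_lie, ← lie_skew a (α ⟨x, hx⟩), neg_lie]
    abel

end LieDerivation

namespace TensorAlgebra

variable {k V : Type*} [CommRing k] [AddCommGroup V] [Module k V]

theorem leibniz_ext {E E' : Module.End k (TensorAlgebra k V)}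
    (hE : ∀ a b, E (a * b) = E a * b + a * E b) (hE' : ∀ a b, E' (a * b) = E' a * b + a * E' b)
    (h : ∀ v, E (ι k v) = E' (ι k v)) : E = E' := by
  have map_one_eq_zero : ∀ {E : Module.End k (TensorAlgebra k V)},
      (∀ a b, E (a * b) = E a * b + a * E b) → E 1 = 0 := fun hE => by
    simpa using hE 1 1
  ext a
  induction a using TensorAlgebra.induction with
  | algebraMap r =>
    rw [Algebra.algebraMap_eq_smul_one, map_smul, map_smul, map_one_eq_zero hE, map_one_eq_zero hE']
  | ι v => exact h v
  | mul a b ha hb => rw [hE, hE', ha, hb]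
  | add a b ha hb => rw [map_add, map_add, ha, hb]

theorem tensorProduct_ext_of_mem_pow {W N : Type*} [AddCommGroup W] [Module k W]
    [AddCommGroup N] [Module k N] {E F : TensorAlgebra k V ⊗[k] W →ₗ[k] N}
    (h : ∀ (n : ℕ) (u : TensorAlgebra k V), u ∈ LinearMap.range (ι k : V →ₗ[k] _) ^ n →
      ∀ w : W, E (u ⊗ₜ w) = F (u ⊗ₜ w)) : E = F := by
  let G := (TensorProduct.mk k (TensorAlgebra k V) W).compr₂ (E - F)
  have hG : ⊤ ≤ LinearMap.ker G := by
    -- the grading of `T(V)` by tensor degree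
    rw [← DirectSum.IsInternal.submodule_iSup_eq_top (DirectSum.Decomposition.isInternal
      fun n : ℕ => LinearMap.range (ι k : V →ₗ[k] TensorAlgebra k V) ^ n)]
    exact iSup_le fun n u hu => LinearMap.mem_ker.mpr <| LinearMap.ext fun w => by
      simp [G, h n u hu w]
  refine TensorProduct.ext' fun u w => sub_eq_zero.mp ?_
  simpa [G] using LinearMap.congr_fun (hG Submodule.mem_top) w

variable {A : Type*} [Ring A] [Algebra k A]

/-- Realised as the second component of the algebra map from `T(V)` to the trivial square-zero
extension `A ⊕ A` that lifts `v ↦ (ρ (ι v), c v)`. -/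
noncomputable def liftDerivation (ρ : TensorAlgebra k V →ₐ[k] A) (c : V →ₗ[k] A) :
    TensorAlgebra k V →ₗ[k] A :=
  (TrivSqZeroExt.sndHom A A).restrictScalars k ∘ₗ
    (lift k ((TrivSqZeroExt.inlAlgHom k A A).toLinearMap ∘ₗ ρ.toLinearMap ∘ₗ ι k
      + (TrivSqZeroExt.inrHom A A).restrictScalars k ∘ₗ c)).toLinearMap

theorem liftDerivation_mul (ρ : TensorAlgebra k V →ₐ[k] A) (c : V →ₗ[k] A)
    (a b : TensorAlgebra k V) :
    liftDerivation ρ c (a * b) = ρ a * liftDerivation ρ c b + liftDerivation ρ c a * ρ b := by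
  set Ψ := lift k ((TrivSqZeroExt.inlAlgHom k A A).toLinearMap ∘ₗ ρ.toLinearMap ∘ₗ ι k
      + (TrivSqZeroExt.inrHom A A).restrictScalars k ∘ₗ c)
  have hfst : (TrivSqZeroExt.fstHom k A A).comp Ψ = ρ := hom_ext <| LinearMap.ext fun v => by
    simp [Ψ]
  change (Ψ (a * b)).snd = ρ a * (Ψ b).snd + (Ψ a).snd * ρ b
  rw [map_mul, TrivSqZeroExt.snd_mul, ← hfst]
  simp

theorem liftDerivation_ι (ρ : TensorAlgebra k V →ₐ[k] A) (c : V →ₗ[k] A) (v : V) :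
    liftDerivation ρ c (ι k v) = c v := by
  simp [liftDerivation]

theorem liftDerivation_one (ρ : TensorAlgebra k V →ₐ[k] A) (c : V →ₗ[k] A) :
    liftDerivation ρ c 1 = 0 := by
  simp [liftDerivation]

end TensorAlgebra

namespace Contragredient

section Lowering

variable {k V W : Type*} [CommRing k] [AddCommGroup V] [Module k V] [AddCommGroup W] [Module k W]

variable (W) in
def leftMul : TensorAlgebra k V →ₐ[k] Module.End k (TensorAlgebra k V ⊗[k] W) :=
  Algebra.lsmul k k _

theorem leftMul_tmul (a u : TensorAlgebra k V) (w : W) :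
    leftMul W a (u ⊗ₜ w) = (a * u) ⊗ₜ w := by
  simp [leftMul, smul_tmul']

theorem rTensor_mulLeft (a : TensorAlgebra k V) :
    LinearMap.rTensor W (LinearMap.mulLeft k a) = leftMul W a :=
  ext' fun u w => by simp [leftMul_tmul]

theorem eq_zero_of_lie_leftMul_eq_zero {E : Module.End k (TensorAlgebra k V ⊗[k] W)}
    (h1 : ∀ w, E ((1 : TensorAlgebra k V) ⊗ₜ w) = 0)
    (hι : ∀ v : V, ⁅E, leftMul W (TensorAlgebra.ι k v)⁆ = 0) : E = 0 := by
  have hcomm : ∀ a, Commute E (leftMul W a) := fun a => by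
    induction a using TensorAlgebra.induction with
    | algebraMap r => rw [AlgHom.commutes]; exact Algebra.commutes r E |>.symm
    | ι v => exact commute_iff_lie_eq.mpr (hι v)
    | mul a b ha hb => rw [map_mul]; exact ha.mul_right hb
    | add a b ha hb => rw [map_add]; exact ha.add_right hb
  refine ext' fun u w => ?_
  rw [← mul_one u, ← leftMul_tmul (W := W), ← Module.End.mul_apply, hcomm u,
    Module.End.mul_apply, h1, map_zero, LinearMap.zero_apply]

/-- For `c v = -η_X(d(v ⊗ f))`, the recursion defining `η₋(f)` reads `⁅E, η₊(v)⁆ = c v`. -/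
def IsLowering (c : V →ₗ[k] Module.End k (TensorAlgebra k V ⊗[k] W))
    (E : Module.End k (TensorAlgebra k V ⊗[k] W)) : Prop :=
  (∀ w : W, E ((1 : TensorAlgebra k V) ⊗ₜ w) = 0) ∧
    ∀ v : V, ⁅E, leftMul W (TensorAlgebra.ι k v)⁆ = c v

namespace IsLowering

variable {c c' : V →ₗ[k] Module.End k (TensorAlgebra k V ⊗[k] W)}
  {E E' : Module.End k (TensorAlgebra k V ⊗[k] W)}

theorem unique (h : IsLowering c E) (h' : IsLowering c E') : E = E' :=
  sub_eq_zero.mp <| eq_zero_of_lie_leftMul_eq_zero (fun w => by simp [h.1, h'.1]) fun v => by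
    rw [sub_lie, h.2, h'.2, sub_self]

theorem add (h : IsLowering c E) (h' : IsLowering c' E') : IsLowering (c + c') (E + E') :=
  ⟨fun w => by simp [h.1, h'.1], fun v => by rw [add_lie, h.2, h'.2, LinearMap.add_apply]⟩

theorem smul (r : k) (h : IsLowering c E) : IsLowering (r • c) (r • E) :=
  ⟨fun w => by simp [h.1], fun v => by
    rw [LinearMap.smul_apply, ← h.2 v, Ring.lie_def, Ring.lie_def, smul_sub, smul_mul_assoc,
      mul_smul_comm]⟩

end IsLowering

theorem isLowering_iff {c : V →ₗ[k] Module.End k (TensorAlgebra k V ⊗[k] W)}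
    {E : Module.End k (TensorAlgebra k V ⊗[k] W)} :
    IsLowering c E ↔ (∀ w : W, E ((1 : TensorAlgebra k V) ⊗ₜ w) = 0) ∧
      ∀ (v : V) (w : W) (n : ℕ) (u : TensorAlgebra k V),
        u ∈ LinearMap.range (TensorAlgebra.ι k : V →ₗ[k] TensorAlgebra k V) ^ n →
        E ((TensorAlgebra.ι k v * u) ⊗ₜ w)
          = c v (u ⊗ₜ w) + leftMul W (TensorAlgebra.ι k v) (E (u ⊗ₜ w)) := by
  refine and_congr_right fun _ => forall_congr' fun v => ?_
  rw [Ring.lie_def, sub_eq_iff_eq_add]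
  constructor
  · intro h w n u _
    rw [← leftMul_tmul, ← Module.End.mul_apply, h, LinearMap.add_apply, Module.End.mul_apply]
  · intro h
    exact TensorAlgebra.tensorProduct_ext_of_mem_pow fun n u hu w => by
      simp [leftMul_tmul, h w n u hu]

noncomputable def lowering (c : V →ₗ[k] Module.End k (TensorAlgebra k V ⊗[k] W)) :
    Module.End k (TensorAlgebra k V ⊗[k] W) :=
  TensorProduct.lift <| LinearMap.lcomp k _ (TensorProduct.mk k (TensorAlgebra k V) W 1) ∘ₗ
    TensorAlgebra.liftDerivation (leftMul W) c

theorem lowering_tmul (c : V →ₗ[k] Module.End k (TensorAlgebra k V ⊗[k] W))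
    (u : TensorAlgebra k V) (w : W) :
    lowering c (u ⊗ₜ w) = TensorAlgebra.liftDerivation (leftMul W) c u (1 ⊗ₜ w) :=
  rfl

theorem isLowering_lowering (c : V →ₗ[k] Module.End k (TensorAlgebra k V ⊗[k] W)) :
    IsLowering c (lowering c) := by
  refine ⟨fun w => ?_, fun v => ext' fun u w => ?_⟩
  · rw [lowering_tmul, TensorAlgebra.liftDerivation_one, LinearMap.zero_apply]
  · rw [Ring.lie_def, LinearMap.sub_apply, Module.End.mul_apply, Module.End.mul_apply,
      leftMul_tmul, lowering_tmul, lowering_tmul, TensorAlgebra.liftDerivation_mul,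
      TensorAlgebra.liftDerivation_ι]
    simp [leftMul_tmul]

theorem existsUnique_isLowering {N : Type*} [AddCommGroup N] [Module k N]
    (c : N →ₗ[k] V →ₗ[k] Module.End k (TensorAlgebra k V ⊗[k] W)) :
    ∃! η : N →ₗ[k] Module.End k (TensorAlgebra k V ⊗[k] W), ∀ n, IsLowering (c n) (η n) := by
  refine ⟨⟨⟨fun n => lowering (c n), fun n n' => ?_⟩, fun r n => ?_⟩,
    fun n => isLowering_lowering (c n),
    fun η hη => LinearMap.ext fun n => (hη n).unique (isLowering_lowering (c n))⟩
  · refine (isLowering_lowering _).unique ?_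
    rw [map_add]
    exact (isLowering_lowering _).add (isLowering_lowering _)
  · refine (isLowering_lowering _).unique ?_
    rw [map_smul]
    exact (isLowering_lowering _).smul r

end Lowering

section Representations

variable {k X V W : Type*} [CommRing k] [LieRing X] [LieAlgebra k X]
  [AddCommGroup V] [Module k V] [AddCommGroup W] [Module k W]

def leibnizLieHom (φ : X →ₗ⁅k⁆ Module.End k V) (D : X → Module.End k (TensorAlgebra k V))
    (hD₁ : ∀ x a b, D x (a * b) = D x a * b + a * D x b)
    (hD₂ : ∀ x v, D x (TensorAlgebra.ι k v) = TensorAlgebra.ι k (φ x v)) :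
    X →ₗ⁅k⁆ Module.End k (TensorAlgebra k V) where
  toFun := D
  map_add' x y := TensorAlgebra.leibniz_ext (hD₁ _)
    (fun a b => by simp only [LinearMap.add_apply, hD₁, add_mul, mul_add]; abel)
    (by simp [hD₂])
  map_smul' r x := TensorAlgebra.leibniz_ext (hD₁ _)
    (fun a b => by
      simp only [LinearMap.smul_apply, hD₁, smul_add, smul_mul_assoc, mul_smul_comm])
    (by simp [hD₂])
  map_lie' {x y} := TensorAlgebra.leibniz_ext (hD₁ _)
    (fun a b => by
      simp only [Ring.lie_def, LinearMap.sub_apply, Module.End.mul_apply, hD₁, map_add]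
      noncomm_ring)
    (by simp [hD₂, Ring.lie_def])

@[simp]
theorem leibnizLieHom_apply (φ : X →ₗ⁅k⁆ Module.End k V)
    (D : X → Module.End k (TensorAlgebra k V))
    (hD₁ : ∀ x a b, D x (a * b) = D x a * b + a * D x b)
    (hD₂ : ∀ x v, D x (TensorAlgebra.ι k v) = TensorAlgebra.ι k (φ x v)) (x : X) :
    leibnizLieHom φ D hD₁ hD₂ x = D x :=
  rfl

def tensorRep {A : Type*} [AddCommGroup A] [Module k A] (α : X →ₗ⁅k⁆ Module.End k A)
    (β : X →ₗ⁅k⁆ Module.End k W) : X →ₗ⁅k⁆ Module.End k (A ⊗[k] W) where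
  toLinearMap :=
    LinearMap.rTensorHom W ∘ₗ α.toLinearMap + LinearMap.lTensorHom A ∘ₗ β.toLinearMap
  map_lie' {x y} := ext' fun a w => by
    simp only [AddHom.toFun_eq_coe, LinearMap.coe_toAddHom, LinearMap.add_apply,
      LinearMap.coe_comp, LinearMap.coe_rTensorHom, LinearMap.coe_lTensorHom,
      LieHom.coe_toLinearMap, Function.comp_apply, LieHom.map_lie, Ring.lie_def,
      LinearMap.rTensor_sub, LinearMap.lTensor_sub, LinearMap.sub_apply, Module.End.mul_apply,
      LinearMap.rTensor_tmul, LinearMap.lTensor_tmul, map_add]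
    abel

@[simp]
theorem tensorRep_apply {A : Type*} [AddCommGroup A] [Module k A] (α : X →ₗ⁅k⁆ Module.End k A)
    (β : X →ₗ⁅k⁆ Module.End k W) (x : X) :
    tensorRep α β x = LinearMap.rTensor W (α x) + LinearMap.lTensor A (β x) :=
  rfl

variable (φ : X →ₗ⁅k⁆ Module.End k V) {D : X → Module.End k (TensorAlgebra k V)}
  (hD₁ : ∀ x a b, D x (a * b) = D x a * b + a * D x b)
  (hD₂ : ∀ x v, D x (TensorAlgebra.ι k v) = TensorAlgebra.ι k (φ x v))
  (ρW : X →ₗ⁅k⁆ Module.End k W)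

theorem tensorRep_leibnizLieHom_one_tmul (x : X) (w : W) :
    tensorRep (leibnizLieHom φ D hD₁ hD₂) ρW x (1 ⊗ₜ w) = 1 ⊗ₜ ρW x w := by
  have hD1 : D x 1 = 0 := by simpa using hD₁ x 1 1
  simp [hD1]

theorem lie_tensorRep_leibnizLieHom_leftMul (x : X) (v : V) :
    ⁅tensorRep (leibnizLieHom φ D hD₁ hD₂) ρW x, leftMul W (TensorAlgebra.ι k v)⁆
      = leftMul W (TensorAlgebra.ι k (φ x v)) :=
  ext' fun u w => by
    simp [Ring.lie_def, leftMul_tmul, hD₁, hD₂, add_tmul]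

end Representations

section Relations

variable {k X V : Type*} [Field k] [LieRing X] [LieAlgebra k X] [AddCommGroup V] [Module k V]

theorem lie_lie_sub_dualAct_lie_eq_zero {A : Type*} [LieRing A] [LieAlgebra k A]
    (φ : X →ₗ⁅k⁆ Module.End k V) (d : V ⊗[k] Module.Dual k V →ₗ[k] X)
    (hd : ∀ x v f, ⁅x, d (v ⊗ₜ[k] f)⁆ = d (φ x v ⊗ₜ[k] f) + d (v ⊗ₜ[k] dualAct k V φ x f))
    (ηX : X →ₗ⁅k⁆ A) (P : V → A) (N : Module.Dual k V → A)
    (hP : ∀ x v, ⁅ηX x, P v⁆ = P (φ x v)) (hN : ∀ f v, ⁅N f, P v⁆ = -ηX (d (v ⊗ₜ f)))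
    (x : X) (f : Module.Dual k V) (v : V) :
    ⁅⁅ηX x, N f⁆ - N (dualAct k V φ x f), P v⁆ = 0 := by
  rw [sub_lie, lie_lie, hN, hP, hN, hN, lie_neg, ← LieHom.map_lie, hd, map_add]
  abel

theorem exists_lieHom_gt {A : Type*} [Ring A] [Algebra k A]
    (φ : X →ₗ⁅k⁆ Module.End k V) (δ : X →ₗ⁅k⁆ LieDerivation k (F k V) (F k V))
    (hδ : ∀ x v f, ((δ x (ιF k V (v, f)) : F k V) : TensorAlgebra k (V × Module.Dual k V))
        = TensorAlgebra.ι k (φ x v, dualAct k V φ x f))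
    (d : V ⊗[k] Module.Dual k V →ₗ[k] X)
    (ηX : X →ₗ⁅k⁆ A) (P : V →ₗ[k] A) (N : Module.Dual k V →ₗ[k] A)
    (hP : ∀ x v, ⁅ηX x, P v⁆ = P (φ x v)) (hN : ∀ x f, ⁅ηX x, N f⁆ = N (dualAct k V φ x f))
    (hPN : ∀ v f, ⁅P v, N f⁆ = ηX (d (v ⊗ₜ f))) :
    ∃ Φ : gt k δ d →ₗ⁅k⁆ A, (∀ x, Φ (ι₀ k δ d x) = ηX x) ∧ (∀ v, Φ (gtV k δ d v) = P v) ∧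
      ∀ f, Φ (gtD k δ d f) = N f := by
  let Θ := TensorAlgebra.lift k (P ∘ₗ LinearMap.fst k V _ + N ∘ₗ LinearMap.snd k V _)
  have hΘ : ∀ v f, Θ (TensorAlgebra.ι k (v, f)) = P v + N f := fun v f => by
    simp [Θ]
  let α : F k V →ₗ⁅k⁆ A := Θ.toLieHom.comp (F k V).incl
  have hα : ∀ x t, α (δ x t) = ⁅ηX x, α t⁆ := fun x =>
    LieDerivation.map_apply_eq_lie_of_lieSpan (δ x) α (ηX x) <| by
      rintro _ ⟨⟨v, f⟩, rfl⟩
      change Θ (δ x (ιF k V (v, f)) : TensorAlgebra k _) = ⁅ηX x, Θ (TensorAlgebra.ι k (v, f))⁆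
      rw [hδ, hΘ, hΘ, lie_add, hP, hN]
  let Φ₀ := LieSemidirectProduct.lift α ηX hα
  have hrel : I0 k δ d ≤ Φ₀.ker := LieSubmodule.lieSpan_le.mpr <| by
    rintro _ ⟨v, f, rfl⟩
    rw [SetLike.mem_coe, LieHom.mem_ker, LieSemidirectProduct.lift_mk, LieHom.map_lie]
    change ⁅Θ (TensorAlgebra.ι k (v, 0)), Θ (TensorAlgebra.ι k (0, f))⁆ + ηX (-d (v ⊗ₜ f)) = 0
    simp [hΘ, hPN]
  refine ⟨(I0 k δ d).liftQ Φ₀ hrel, fun x => ?_, fun v => ?_, fun f => ?_⟩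
  · change α 0 + ηX x = ηX x
    simp
  · change Θ (TensorAlgebra.ι k (v, 0)) + ηX 0 = P v
    simp [hΘ]
  · change Θ (TensorAlgebra.ι k (0, f)) + ηX 0 = N f
    simp [hΘ]

end Relations

theorem representation_on_tensor_algebra_general
    {k : Type*} [Field k]
    {X : Type*} [LieRing X] [LieAlgebra k X]
    {V : Type*} [AddCommGroup V] [Module k V]
    (φ : X →ₗ⁅k⁆ Module.End k V)
    (δ : X →ₗ⁅k⁆ LieDerivation k (F k V) (F k V))
    (hδ : ∀ (x : X) (v : V) (f : Module.Dual k V),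
      ((δ x (ιF k V (v, f)) : F k V) : TensorAlgebra k (V × Module.Dual k V))
        = TensorAlgebra.ι k (φ x v, dualAct k V φ x f))
    (d : V ⊗[k] Module.Dual k V →ₗ[k] X)
    (hd : ∀ (x : X) (v : V) (f : Module.Dual k V),
      ⁅x, d (v ⊗ₜ[k] f)⁆ = d (φ x v ⊗ₜ[k] f) + d (v ⊗ₜ[k] dualAct k V φ x f))
    {W : Type*} [AddCommGroup W] [Module k W]
    (ρW : X →ₗ⁅k⁆ Module.End k W)
    (D : X → Module.End k (TensorAlgebra k V))
    (hD₁ : ∀ (x : X) (a b : TensorAlgebra k V), D x (a * b) = D x a * b + a * D x b)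
    (hD₂ : ∀ (x : X) (v : V), D x (TensorAlgebra.ι k v) = TensorAlgebra.ι k (φ x v))
    -- the diagonal action of `𝔛` on `T(V) ⊗ W`
    (ηX : X → Module.End k (TensorAlgebra k V ⊗[k] W))
    (hηX : ∀ x : X, ηX x = LinearMap.rTensor W (D x)
      + LinearMap.lTensor (TensorAlgebra k V) (ρW x))
    -- the action of `V` on `T(V) ⊗ W` by left multiplication
    (ηP : V → Module.End k (TensorAlgebra k V ⊗[k] W))
    (hηP : ∀ v : V, ηP v = LinearMap.rTensor W (LinearMap.mulLeft k (TensorAlgebra.ι k v))) :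
    -- (1) existence and uniqueness of `η₋`
    (∃! ηM : Module.Dual k V →ₗ[k] Module.End k (TensorAlgebra k V ⊗[k] W),
      (∀ (f : Module.Dual k V) (w : W), ηM f ((1 : TensorAlgebra k V) ⊗ₜ[k] w) = 0) ∧
      (∀ (f : Module.Dual k V) (v : V) (w : W) (n : ℕ) (u : TensorAlgebra k V),
        u ∈ (LinearMap.range (TensorAlgebra.ι k : V →ₗ[k] TensorAlgebra k V)) ^ n →
        ηM f ((TensorAlgebra.ι k v * u) ⊗ₜ[k] w)
          = - ηX (d (v ⊗ₜ[k] f)) (u ⊗ₜ[k] w) + ηP v (ηM f (u ⊗ₜ[k] w)))) ∧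
    -- (2) for `η₋` as in (1), the three operators define a representation of `g̃`
    (∀ ηM : Module.Dual k V →ₗ[k] Module.End k (TensorAlgebra k V ⊗[k] W),
      ((∀ (f : Module.Dual k V) (w : W), ηM f ((1 : TensorAlgebra k V) ⊗ₜ[k] w) = 0) ∧
       (∀ (f : Module.Dual k V) (v : V) (w : W) (n : ℕ) (u : TensorAlgebra k V),
        u ∈ (LinearMap.range (TensorAlgebra.ι k : V →ₗ[k] TensorAlgebra k V)) ^ n →
        ηM f ((TensorAlgebra.ι k v * u) ⊗ₜ[k] w)
          = - ηX (d (v ⊗ₜ[k] f)) (u ⊗ₜ[k] w) + ηP v (ηM f (u ⊗ₜ[k] w)))) →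
      ∃ Φ : gt k δ d →ₗ⁅k⁆ Module.End k (TensorAlgebra k V ⊗[k] W),
        (∀ x : X, Φ (ι₀ k δ d x) = ηX x) ∧
        (∀ v : V, Φ (gtV k δ d v) = ηP v) ∧
        (∀ f : Module.Dual k V, Φ (gtD k δ d f) = ηM f)) := by
  obtain rfl : ηP = fun v => leftMul W (TensorAlgebra.ι k v) :=
    funext fun v => (hηP v).trans (rTensor_mulLeft _)
  have hP := lie_tensorRep_leibnizLieHom_leftMul φ hD₁ hD₂ ρW
  have hX1 := tensorRep_leibnizLieHom_one_tmul φ hD₁ hD₂ ρW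
  set ηXₗ := tensorRep (leibnizLieHom φ D hD₁ hD₂) ρW
  obtain rfl : ηX = ηXₗ := funext hηX
  let c : Module.Dual k V →ₗ[k] V →ₗ[k] Module.End k (TensorAlgebra k V ⊗[k] W) :=
    (TensorProduct.mk k V (Module.Dual k V)).flip.compr₂ (-(ηXₗ.toLinearMap ∘ₗ d))
  have hc : ∀ f v t, -ηXₗ (d (v ⊗ₜ f)) t = c f v t := fun _ _ _ => rfl
  simp only [hc, ← isLowering_iff, ← forall_and]
  refine ⟨existsUnique_isLowering c, fun ηM hηM => ?_⟩
  have hMP : ∀ f v, ⁅ηM f, leftMul W (TensorAlgebra.ι k v)⁆ = -ηXₗ (d (v ⊗ₜ f)) :=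
    fun f v => (hηM f).2 v
  have hN : ∀ x f, ⁅ηXₗ x, ηM f⁆ = ηM (dualAct k V φ x f) := fun x f =>
    sub_eq_zero.mp <| eq_zero_of_lie_leftMul_eq_zero
      (fun w => by simp [hX1, Ring.lie_def, (hηM _).1])
      (lie_lie_sub_dualAct_lie_eq_zero φ d hd ηXₗ _ _ hP hMP x f)
  obtain ⟨Φ, hΦX, hΦP, hΦN⟩ := exists_lieHom_gt φ δ hδ d ηXₗ
    ((leftMul W).toLinearMap ∘ₗ TensorAlgebra.ι k) ηM hP hN
    fun v f => by rw [← lie_skew, LinearMap.comp_apply, AlgHom.toLinearMap_apply, hMP, neg_neg]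
  exact ⟨Φ, hΦX, hΦP, hΦN⟩

/-- For any `𝔛`-module `W`, the operators `η_X` (diagonal action on `T(V) ⊗ W`, with `x`
acting on `T(V)` as the unique derivation `D x` extending its action on `V`), `η₊` (left
multiplication on the `T(V)` factor), and `η₋` (defined by the stated recursion on tensor
degree) exist — `η₋` uniquely — and assemble into a Lie algebra homomorphism
`Φ : g̃(ρ, d) → End (T(V) ⊗ W)`. -/
theorem representation_on_tensor_algebra
    {k : Type*} [Field k]
    {X : Type*} [LieRing X] [LieAlgebra k X] [FiniteDimensional k X]
    {V : Type*} [AddCommGroup V] [Module k V] [FiniteDimensional k V]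
    (φ : X →ₗ⁅k⁆ Module.End k V)
    (δ : X →ₗ⁅k⁆ LieDerivation k (F k V) (F k V))
    (hδ : ∀ (x : X) (v : V) (f : Module.Dual k V),
      ((δ x (ιF k V (v, f)) : F k V) : TensorAlgebra k (V × Module.Dual k V))
        = TensorAlgebra.ι k (φ x v, dualAct k V φ x f))
    (d : V ⊗[k] Module.Dual k V →ₗ[k] X)
    (hd : ∀ (x : X) (v : V) (f : Module.Dual k V),
      ⁅x, d (v ⊗ₜ[k] f)⁆ = d (φ x v ⊗ₜ[k] f) + d (v ⊗ₜ[k] dualAct k V φ x f))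
    {W : Type*} [AddCommGroup W] [Module k W]
    (ρW : X →ₗ⁅k⁆ Module.End k W)
    (D : X → Module.End k (TensorAlgebra k V))
    (hD₁ : ∀ (x : X) (a b : TensorAlgebra k V), D x (a * b) = D x a * b + a * D x b)
    (hD₂ : ∀ (x : X) (v : V), D x (TensorAlgebra.ι k v) = TensorAlgebra.ι k (φ x v))
    -- the diagonal action of `𝔛` on `T(V) ⊗ W`
    (ηX : X → Module.End k (TensorAlgebra k V ⊗[k] W))
    (hηX : ∀ x : X, ηX x = LinearMap.rTensor W (D x)
      + LinearMap.lTensor (TensorAlgebra k V) (ρW x))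
    -- the action of `V` on `T(V) ⊗ W` by left multiplication
    (ηP : V → Module.End k (TensorAlgebra k V ⊗[k] W))
    (hηP : ∀ v : V, ηP v = LinearMap.rTensor W (LinearMap.mulLeft k (TensorAlgebra.ι k v))) :
    -- (1) existence and uniqueness of `η₋`
    (∃! ηM : Module.Dual k V →ₗ[k] Module.End k (TensorAlgebra k V ⊗[k] W),
      (∀ (f : Module.Dual k V) (w : W), ηM f ((1 : TensorAlgebra k V) ⊗ₜ[k] w) = 0) ∧
      (∀ (f : Module.Dual k V) (v : V) (w : W) (n : ℕ) (u : TensorAlgebra k V),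
        u ∈ (LinearMap.range (TensorAlgebra.ι k : V →ₗ[k] TensorAlgebra k V)) ^ n →
        ηM f ((TensorAlgebra.ι k v * u) ⊗ₜ[k] w)
          = - ηX (d (v ⊗ₜ[k] f)) (u ⊗ₜ[k] w) + ηP v (ηM f (u ⊗ₜ[k] w)))) ∧
    -- (2) for `η₋` as in (1), the three operators define a representation of `g̃`
    (∀ ηM : Module.Dual k V →ₗ[k] Module.End k (TensorAlgebra k V ⊗[k] W),
      ((∀ (f : Module.Dual k V) (w : W), ηM f ((1 : TensorAlgebra k V) ⊗ₜ[k] w) = 0) ∧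
       (∀ (f : Module.Dual k V) (v : V) (w : W) (n : ℕ) (u : TensorAlgebra k V),
        u ∈ (LinearMap.range (TensorAlgebra.ι k : V →ₗ[k] TensorAlgebra k V)) ^ n →
        ηM f ((TensorAlgebra.ι k v * u) ⊗ₜ[k] w)
          = - ηX (d (v ⊗ₜ[k] f)) (u ⊗ₜ[k] w) + ηP v (ηM f (u ⊗ₜ[k] w)))) →
      ∃ Φ : gt k δ d →ₗ⁅k⁆ Module.End k (TensorAlgebra k V ⊗[k] W),
        (∀ x : X, Φ (ι₀ k δ d x) = ηX x) ∧
        (∀ v : V, Φ (gtV k δ d v) = ηP v) ∧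
        (∀ f : Module.Dual k V, Φ (gtD k δ d f) = ηM f)) :=
  representation_on_tensor_algebra_general φ δ hδ d hd ρW D hD₁ hD₂ ηX hηX ηP hηP

end Contragredient
end
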